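/- arXiv:1911.00803 — 8 statements merged into one kernel-verified Lean document; each statement's English description precedes it below -/
import Mathlib

section
/- Bijection between quantum transport plans and quantum couplings (Proposition 2.3, finite-dimensional, full-rank case): let ρ be a positive definite density matrix of size n and σ a density matrix of size n. Let M be the set of linear maps Φ : Matrix (Fin n) (Fin n) ℂ → Matrix (Fin n) (Fin n) ℂ such that there exist finitely many matrices B₁, …, B_m with Φ X = ∑ t, B_t * X * (B_t)ᴴ for all X, ∑ t, (B_t)ᴴ * B_t = 1, and Φ ρ = σ. Then the map sending Φ ∈ M to the matrix Π_Φ with entries (Π_Φ) (i, j) (k, l) = (Φ (√ρ * (Matrix.single j l 1) * √ρ)) i k is a bijection from M onto the set of couplings between ρ and σ. -/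
open Matrix
open scoped ComplexOrder

noncomputable section

/-- A density matrix: positive semidefinite with trace 1. -/
def IsDensity {ι : Type*} [Fintype ι] (ρ : Matrix ι ι ℂ) : Prop :=
  ρ.PosSemidef ∧ ρ.trace = 1

/-- A coupling between the quantum states `ρ` and `σ`. -/
def IsCoupling {ι : Type*} [Fintype ι] (ρ σ : Matrix ι ι ℂ)
    (P : Matrix (ι × ι) (ι × ι) ℂ) : Prop :=
  P.PosSemidef ∧ P.trace = 1 ∧
  (∀ j l, ∑ i, P (i, j) (i, l) = ρ l j) ∧
  (∀ i k, ∑ j, P (i, j) (k, j) = σ i k)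

/-- The cost operator `C = ∑ s, (Rₛ ⊗ I − I ⊗ Rₛᵀ)²` associated to a family of
Hermitian matrices. -/
def costOp {ι : Type*} [Fintype ι] [DecidableEq ι] {κ : Type*} [Fintype κ]
    (R : κ → Matrix ι ι ℂ) : Matrix (ι × ι) (ι × ι) ℂ :=
  ∑ s, (Matrix.of (fun p q : ι × ι =>
      R s p.1 q.1 * (if p.2 = q.2 then 1 else 0)
      - (if p.1 = q.1 then 1 else 0) * R s q.2 p.2)) ^ 2

/-- The old Mathlib `Matrix.PosSemidef.sqrt` (removed upstream), restored verbatim. -/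
def Matrix.PosSemidef.sqrt {n : Type*} [Fintype n] [DecidableEq n] {A : Matrix n n ℂ}
    (hA : A.PosSemidef) : Matrix n n ℂ :=
  hA.1.eigenvectorUnitary.1 * diagonal ((↑) ∘ Real.sqrt ∘ hA.1.eigenvalues) *
    (star hA.1.eigenvectorUnitary : Matrix n n ℂ)

/-! Write `Q = √ρ`. For a Kraus map `Φ X = ∑ₜ Bₜ X Bₜᴴ`, the matrix `Π_Φ` is the Gram matrix
`∑ₜ vec(Bₜ Q) vec(Bₜ Q)ᴴ`; it is therefore positive semidefinite, and its partial traces are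
`∑ₜ (Bₜ Q)ᴴ (Bₜ Q) = Q (∑ₜ Bₜᴴ Bₜ) Q = ρ` and `∑ₜ (Bₜ Q) (Bₜ Q)ᴴ = Φ ρ = σ`. Conversely, a
positive semidefinite `Π` factors as `∑ₜ vec Kₜ (vec Kₜ)ᴴ`, and then `Bₜ = Kₜ Q⁻¹` are Kraus
operators of a transport plan `Φ` with `Π_Φ = Π`. Injectivity holds because `Q` is invertible,
so the matrices `Q Eⱼₗ Q` span. -/

namespace Matrix.PosSemidef

variable {n : Type*} [Fintype n] [DecidableEq n] {A : Matrix n n ℂ}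

lemma sqrt_conjTranspose (hA : A.PosSemidef) : hA.sqrtᴴ = hA.sqrt := by
  have hd : star ((↑) ∘ Real.sqrt ∘ hA.1.eigenvalues : n → ℂ) =
      ((↑) ∘ Real.sqrt ∘ hA.1.eigenvalues : n → ℂ) := by
    funext i
    simp
  simp only [Matrix.PosSemidef.sqrt, conjTranspose_mul, diagonal_conjTranspose, hd,
    star_eq_conjTranspose, conjTranspose_conjTranspose, Matrix.mul_assoc]

lemma sqrt_mul_self (hA : A.PosSemidef) : hA.sqrt * hA.sqrt = A := by
  set U : Matrix n n ℂ := hA.1.eigenvectorUnitary.1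
  have hU : star U * U = 1 := Unitary.star_mul_self_of_mem hA.1.eigenvectorUnitary.2
  have hD : diagonal ((↑) ∘ Real.sqrt ∘ hA.1.eigenvalues) *
      diagonal ((↑) ∘ Real.sqrt ∘ hA.1.eigenvalues) =
      diagonal (RCLike.ofReal ∘ hA.1.eigenvalues : n → ℂ) := by
    rw [diagonal_mul_diagonal]
    congr 1
    ext i
    simp only [Function.comp_apply]
    rw [← Complex.ofReal_mul, Real.mul_self_sqrt (hA.eigenvalues_nonneg i)]
    rfl
  conv_rhs => rw [hA.1.spectral_theorem, Unitary.conjStarAlgAut_apply, ← hD]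
  simp only [Matrix.PosSemidef.sqrt, Matrix.mul_assoc]
  rw [← Matrix.mul_assoc (star U), hU, Matrix.one_mul]

end Matrix.PosSemidef

namespace Matrix

variable {ι κ : Type*} [Fintype ι] [Fintype κ]

lemma mul_single_one_mul_conjTranspose_apply [DecidableEq ι] (A : Matrix ι ι ℂ) (i j k l : ι) :
    (A * single j l (1 : ℂ) * Aᴴ) i k = A i j * star (A k l) := by
  simp [Matrix.mul_apply, single, ite_and]

/-- `∑ₜ vec Kₜ (vec Kₜ)ᴴ`, where `vec K` lists the entries of `K` indexed by `ι × ι`. -/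
def vecGram (K : κ → Matrix ι ι ℂ) : Matrix (ι × ι) (ι × ι) ℂ :=
  of fun p q => ∑ t, K t p.1 p.2 * star (K t q.1 q.2)

lemma posSemidef_vecGram (K : κ → Matrix ι ι ℂ) : (vecGram K).PosSemidef := by
  convert posSemidef_conjTranspose_mul_self (of fun t (p : ι × ι) => star (K t p.1 p.2))
  ext p q
  simp [vecGram, Matrix.mul_apply]

lemma sum_vecGram_fst (K : κ → Matrix ι ι ℂ) (j l : ι) :
    ∑ i, vecGram K (i, j) (i, l) = (∑ t, (K t)ᴴ * K t) l j := by
  simp only [vecGram, of_apply, sum_apply, Matrix.mul_apply, conjTranspose_apply]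
  rw [Finset.sum_comm]
  simp only [mul_comm]

lemma sum_vecGram_snd (K : κ → Matrix ι ι ℂ) (i k : ι) :
    ∑ j, vecGram K (i, j) (k, j) = (∑ t, K t * (K t)ᴴ) i k := by
  simp only [vecGram, of_apply, sum_apply, Matrix.mul_apply, conjTranspose_apply]
  rw [Finset.sum_comm]

lemma trace_eq_of_sum_fst {P : Matrix (ι × ι) (ι × ι) ℂ} {ρ : Matrix ι ι ℂ}
    (h : ∀ j l, ∑ i, P (i, j) (i, l) = ρ l j) : P.trace = ρ.trace := by
  simp only [trace, diag_apply, Fintype.sum_prod_type]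
  rw [Finset.sum_comm]
  exact Finset.sum_congr rfl fun j _ => h j j

lemma PosSemidef.exists_eq_vecGram [DecidableEq ι] {P : Matrix (ι × ι) (ι × ι) ℂ}
    (hP : P.PosSemidef) : ∃ m, ∃ K : Fin m → Matrix ι ι ℂ, vecGram K = P := by
  let e := Fintype.equivFin (ι × ι)
  set S := hP.sqrt
  refine ⟨_, fun t => of fun i j => star (S (e.symm t) (i, j)), ?_⟩
  ext p q
  have hS : P = Sᴴ * S := by rw [hP.sqrt_conjTranspose, hP.sqrt_mul_self]
  rw [hS, Matrix.mul_apply]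
  simp only [vecGram, of_apply, star_star, conjTranspose_apply]
  exact e.symm.sum_comp (fun r => star (S r p) * S r q)

end Matrix

section Transport

variable {ι κ : Type*} [Fintype ι] [DecidableEq ι] [Fintype κ]

def krausMap (B : κ → Matrix ι ι ℂ) : Matrix ι ι ℂ →ₗ[ℂ] Matrix ι ι ℂ :=
  ∑ t, LinearMap.mulLeft ℂ (B t) ∘ₗ LinearMap.mulRight ℂ (B t)ᴴ

lemma krausMap_apply (B : κ → Matrix ι ι ℂ) (X : Matrix ι ι ℂ) :
    krausMap B X = ∑ t, B t * X * (B t)ᴴ := by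
  simp [krausMap, Matrix.mul_assoc]

def planMatrix (Q : Matrix ι ι ℂ) (Φ : Matrix ι ι ℂ →ₗ[ℂ] Matrix ι ι ℂ) :
    Matrix (ι × ι) (ι × ι) ℂ :=
  of fun p q => Φ (Q * single p.2 q.2 (1 : ℂ) * Q) p.1 q.1

lemma planMatrix_krausMap {Q : Matrix ι ι ℂ} (hQ : Qᴴ = Q) (B : κ → Matrix ι ι ℂ) :
    planMatrix Q (krausMap B) = vecGram fun t => B t * Q := by
  ext p q
  have hconj : ∀ t, B t * (Q * single p.2 q.2 (1 : ℂ) * Q) * (B t)ᴴ =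
      B t * Q * single p.2 q.2 (1 : ℂ) * (B t * Q)ᴴ := fun t => by
    rw [conjTranspose_mul, hQ]
    simp only [Matrix.mul_assoc]
  simp only [planMatrix, vecGram, of_apply, krausMap_apply, Matrix.sum_apply, hconj,
    mul_single_one_mul_conjTranspose_apply]

lemma planMatrix_injective {Q : Matrix ι ι ℂ} (hQ : IsUnit Q) :
    Function.Injective (planMatrix Q) := by
  intro Φ₁ Φ₂ h
  have hdet := (isUnit_iff_isUnit_det Q).mp hQ
  let conjQ := LinearMap.mulLeft ℂ Q ∘ₗ LinearMap.mulRight ℂ Q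
  have hsurj : Function.Surjective conjQ := fun X => ⟨Q⁻¹ * X * Q⁻¹, by
    simp [conjQ, Matrix.mul_assoc, nonsing_inv_mul Q hdet, mul_nonsing_inv_cancel_left Q X hdet]⟩
  refine (LinearMap.cancel_right hsurj).mp (ext_linearMap ℂ fun j l => LinearMap.ext_ring ?_)
  ext i k
  simpa [conjQ, planMatrix, Matrix.mul_assoc] using congr_fun₂ h (i, j) (k, l)

variable {ρ σ Q : Matrix ι ι ℂ}

lemma isCoupling_planMatrix_krausMap (hQ : Qᴴ = Q) (hQρ : Q * Q = ρ) (hρ : ρ.trace = 1)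
    {B : κ → Matrix ι ι ℂ} (hB : ∑ t, (B t)ᴴ * B t = 1) (hBρ : krausMap B ρ = σ) :
    IsCoupling ρ σ (planMatrix Q (krausMap B)) := by
  have hfst : ∑ t, (B t * Q)ᴴ * (B t * Q) = ρ :=
    calc ∑ t, (B t * Q)ᴴ * (B t * Q) = Q * (∑ t, (B t)ᴴ * B t) * Q := by
          simp only [conjTranspose_mul, hQ, Matrix.mul_sum, Matrix.sum_mul, Matrix.mul_assoc]
      _ = ρ := by rw [hB, Matrix.mul_one, hQρ]
  have hsnd : ∑ t, (B t * Q) * (B t * Q)ᴴ = σ := by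
    simp only [← hBρ, krausMap_apply, ← hQρ, conjTranspose_mul, hQ, Matrix.mul_assoc]
  have hmarg : ∀ j l, ∑ i, vecGram (fun t => B t * Q) (i, j) (i, l) = ρ l j := fun j l => by
    rw [sum_vecGram_fst, hfst]
  rw [planMatrix_krausMap hQ]
  exact ⟨posSemidef_vecGram _, (trace_eq_of_sum_fst hmarg).trans hρ, hmarg,
    fun i k => by rw [sum_vecGram_snd, hsnd]⟩

lemma exists_krausMap_planMatrix_eq (hQ : Qᴴ = Q) (hQρ : Q * Q = ρ) (hQu : IsUnit Q)
    {P : Matrix (ι × ι) (ι × ι) ℂ} (hP : IsCoupling ρ σ P) :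
    ∃ m, ∃ B : Fin m → Matrix ι ι ℂ,
      ∑ t, (B t)ᴴ * B t = 1 ∧ krausMap B ρ = σ ∧ planMatrix Q (krausMap B) = P := by
  obtain ⟨hPsd, -, hfst, hsnd⟩ := hP
  obtain ⟨m, K, rfl⟩ := hPsd.exists_eq_vecGram
  have hdet : IsUnit Q.det := (isUnit_iff_isUnit_det Q).mp hQu
  have hQinv : Q⁻¹ᴴ = Q⁻¹ := by rw [conjTranspose_nonsing_inv, hQ]
  have hKfst : ∑ t, (K t)ᴴ * K t = ρ := by
    ext l j
    rw [← sum_vecGram_fst, hfst]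
  have hKsnd : ∑ t, K t * (K t)ᴴ = σ := by
    ext i k
    rw [← sum_vecGram_snd, hsnd]
  refine ⟨m, fun t => K t * Q⁻¹, ?_, ?_, ?_⟩
  · calc ∑ t, (K t * Q⁻¹)ᴴ * (K t * Q⁻¹) = Q⁻¹ * (∑ t, (K t)ᴴ * K t) * Q⁻¹ := by
          simp only [conjTranspose_mul, hQinv, Matrix.mul_sum, Matrix.sum_mul, Matrix.mul_assoc]
      _ = 1 := by
          rw [hKfst, ← hQρ, nonsing_inv_mul_cancel_left Q Q hdet, mul_nonsing_inv Q hdet]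
  · simp only [krausMap_apply, ← hKsnd, ← hQρ, conjTranspose_mul, hQinv, Matrix.mul_assoc,
      nonsing_inv_mul_cancel_left Q _ hdet, mul_nonsing_inv_cancel_left Q _ hdet]
  · simp only [planMatrix_krausMap hQ, nonsing_inv_mul_cancel_right Q _ hdet]

end Transport

theorem transport_plans_couplings_bijection_general {n : ℕ}
    (ρ σ : Matrix (Fin n) (Fin n) ℂ)
    (hρ : IsDensity ρ) (hρ_pd : IsUnit ρ) :
    Set.BijOn
      (fun Φ : Matrix (Fin n) (Fin n) ℂ →ₗ[ℂ] Matrix (Fin n) (Fin n) ℂ =>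
        Matrix.of fun p q : Fin n × Fin n =>
          Φ (hρ.1.sqrt * Matrix.single p.2 q.2 (1 : ℂ) * hρ.1.sqrt) p.1 q.1)
      {Φ : Matrix (Fin n) (Fin n) ℂ →ₗ[ℂ] Matrix (Fin n) (Fin n) ℂ |
        (∃ m : ℕ, ∃ B : Fin m → Matrix (Fin n) (Fin n) ℂ,
          (∀ X, Φ X = ∑ t, B t * X * (B t)ᴴ) ∧ ∑ t, (B t)ᴴ * B t = 1) ∧ Φ ρ = σ}
      {P : Matrix (Fin n × Fin n) (Fin n × Fin n) ℂ | IsCoupling ρ σ P} := by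
  set Q := hρ.1.sqrt
  have hQ : Qᴴ = Q := hρ.1.sqrt_conjTranspose
  have hQρ : Q * Q = ρ := hρ.1.sqrt_mul_self
  have hQu : IsUnit Q := isUnit_mul_self_iff.mp (hQρ ▸ hρ_pd)
  refine ⟨?_, (planMatrix_injective hQu).injOn, ?_⟩
  · rintro Φ ⟨⟨m, B, hΦ, hB⟩, hΦρ⟩
    obtain rfl : Φ = krausMap B := LinearMap.ext fun X => (hΦ X).trans (krausMap_apply B X).symm
    exact isCoupling_planMatrix_krausMap hQ hQρ hρ.2 hB hΦρ
  · intro P hP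
    obtain ⟨m, B, hB, hBρ, hBP⟩ := exists_krausMap_planMatrix_eq hQ hQρ hQu hP
    exact ⟨krausMap B, ⟨⟨m, B, krausMap_apply B, hB⟩, hBρ⟩, hBP⟩

/-- **Bijection between quantum transport plans and quantum couplings**
(Proposition 2.3, finite-dimensional, full-rank case). -/
theorem transport_plans_couplings_bijection {n : ℕ}
    (ρ σ : Matrix (Fin n) (Fin n) ℂ)
    (hρ : IsDensity ρ) (hρ_pd : IsUnit ρ) (hσ : IsDensity σ) :
    Set.BijOn
      (fun Φ : Matrix (Fin n) (Fin n) ℂ →ₗ[ℂ] Matrix (Fin n) (Fin n) ℂ =>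
        Matrix.of fun p q : Fin n × Fin n =>
          Φ (hρ.1.sqrt * Matrix.single p.2 q.2 (1 : ℂ) * hρ.1.sqrt) p.1 q.1)
      {Φ : Matrix (Fin n) (Fin n) ℂ →ₗ[ℂ] Matrix (Fin n) (Fin n) ℂ |
        (∃ m : ℕ, ∃ B : Fin m → Matrix (Fin n) (Fin n) ℂ,
          (∀ X, Φ X = ∑ t, B t * X * (B t)ᴴ) ∧ ∑ t, (B t)ᴴ * B t = 1) ∧ Φ ρ = σ}
      {P : Matrix (Fin n × Fin n) (Fin n × Fin n) ℂ | IsCoupling ρ σ P} :=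
  transport_plans_couplings_bijection_general ρ σ hρ hρ_pd
end
end

section
/- Swap symmetry of couplings (Proposition 3.3): let ρ, σ be density matrices of size n and let Π be a coupling between ρ and σ. Define Π^{ST} by Π^{ST} (i, j) (k, l) = Π (l, k) (j, i). Then Π^{ST} is a coupling between σ and ρ, and for any Hermitian matrices R₁, …, R_N with cost operator C, (Tr(C * Π^{ST})).re = (Tr(C * Π)).re. -/
open Matrix
open scoped ComplexOrder

noncomputable section

/-- **Swap symmetry of couplings** (Proposition 3.3): the swap transposition
`Π^{ST} (i,j) (k,l) = Π (l,k) (j,i)` sends couplings between `ρ` and `σ` to couplings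
between `σ` and `ρ` with the same cost. -/
theorem swap_transposition {n N : ℕ}
    (ρ σ : Matrix (Fin n) (Fin n) ℂ) (hρ : IsDensity ρ) (hσ : IsDensity σ)
    (P : Matrix (Fin n × Fin n) (Fin n × Fin n) ℂ) (hP : IsCoupling ρ σ P)
    (R : Fin N → Matrix (Fin n) (Fin n) ℂ) (hR : ∀ s, (R s).IsHermitian) :
    IsCoupling σ ρ (Matrix.of fun p q : Fin n × Fin n => P (q.2, q.1) (p.2, p.1)) ∧
    (Matrix.trace (costOp R *
        Matrix.of fun p q : Fin n × Fin n => P (q.2, q.1) (p.2, p.1))).re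
      = (Matrix.trace (costOp R * P)).re := by
  obtain ⟨hPSD, htr, hm1, hm2⟩ := hP
  set Q : Matrix (Fin n × Fin n) (Fin n × Fin n) ℂ :=
    Matrix.of fun p q : Fin n × Fin n => P (q.2, q.1) (p.2, p.1) with hQ
  have hQeq : Q = (Pᵀ).submatrix Prod.swap Prod.swap := by
    ext ⟨a, b⟩ ⟨c, d⟩; rfl
  -- the matrices Aₛ in the cost operator
  set A : Fin N → Matrix (Fin n × Fin n) (Fin n × Fin n) ℂ :=
    fun s => Matrix.of (fun p q : Fin n × Fin n =>
      R s p.1 q.1 * (if p.2 = q.2 then 1 else 0)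
      - (if p.1 = q.1 then 1 else 0) * R s q.2 p.2) with hA
  have hAswap : ∀ (s : Fin N) (p q : Fin n × Fin n),
      A s (q.2, q.1) (p.2, p.1) = - A s p q := by
    intro s p q
    simp only [hA, Matrix.of_apply]
    by_cases h1 : p.1 = q.1 <;> by_cases h2 : p.2 = q.2 <;>
      simp [h1, h2, eq_comm (a := q.1), eq_comm (a := q.2)] <;> ring
  have hC : ∀ p q : Fin n × Fin n, costOp R (q.2, q.1) (p.2, p.1) = costOp R p q := by
    intro p q
    simp only [costOp, Matrix.sum_apply, pow_two, Matrix.mul_apply, ← hA]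
    refine Finset.sum_congr rfl fun s _ => ?_
    calc ∑ r : Fin n × Fin n, A s (q.2, q.1) r * A s r (p.2, p.1)
        = ∑ r : Fin n × Fin n, A s (q.2, q.1) (r.2, r.1) * A s (r.2, r.1) (p.2, p.1) :=
          (Fintype.sum_equiv (Equiv.prodComm (Fin n) (Fin n))
            (fun r => A s (q.2, q.1) (r.2, r.1) * A s (r.2, r.1) (p.2, p.1))
            (fun r => A s (q.2, q.1) r * A s r (p.2, p.1)) (fun r => rfl)).symm
      _ = ∑ r : Fin n × Fin n, A s p r * A s r q := by
          refine Finset.sum_congr rfl fun r _ => ?_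
          rw [hAswap s r q, hAswap s p r]; ring
  refine ⟨⟨?_, ?_, ?_, ?_⟩, ?_⟩
  · rw [hQeq]; exact hPSD.transpose.submatrix _
  · have : Q.trace = P.trace := by
      simp only [Matrix.trace, Matrix.diag, hQ, Matrix.of_apply]
      rw [Fintype.sum_prod_type, Fintype.sum_prod_type]
      exact Finset.sum_comm
    rw [this, htr]
  · intro j l
    simp only [hQ, Matrix.of_apply]
    exact hm2 l j
  · intro i k
    simp only [hQ, Matrix.of_apply]
    exact hm1 k i
  · congr 1
    have lhs : (costOp R * Q).trace
        = ∑ p : Fin n × Fin n, ∑ q : Fin n × Fin n,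
            costOp R p q * P (p.2, p.1) (q.2, q.1) := by
      simp [Matrix.trace, Matrix.mul_apply, hQ, Matrix.diag]
    have rhs : (costOp R * P).trace
        = ∑ p : Fin n × Fin n, ∑ q : Fin n × Fin n, costOp R p q * P q p := by
      simp [Matrix.trace, Matrix.mul_apply, Matrix.diag]
    rw [lhs, rhs]
    calc ∑ p : Fin n × Fin n, ∑ q : Fin n × Fin n,
            costOp R p q * P (p.2, p.1) (q.2, q.1)
        = ∑ p : Fin n × Fin n, ∑ q : Fin n × Fin n,
            costOp R (p.2, p.1) (q.2, q.1) * P p q := by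
          refine (Fintype.sum_equiv (Equiv.prodComm (Fin n) (Fin n))
            (fun p => ∑ q : Fin n × Fin n, costOp R (p.2, p.1) (q.2, q.1) * P p q)
            (fun p => ∑ q : Fin n × Fin n, costOp R p q * P (p.2, p.1) (q.2, q.1))
            fun p => ?_).symm
          exact Fintype.sum_equiv (Equiv.prodComm (Fin n) (Fin n)) _ _ fun q => rfl
      _ = ∑ p : Fin n × Fin n, ∑ q : Fin n × Fin n, costOp R q p * P p q :=
          Finset.sum_congr rfl fun p _ => Finset.sum_congr rfl fun q _ => by rw [hC q p]
      _ = ∑ p : Fin n × Fin n, ∑ q : Fin n × Fin n, costOp R p q * P q p :=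
          Finset.sum_comm
end
end

section
/- Symmetry of the quantum Wasserstein distance (Remark 3.5): let ρ, σ be density matrices of size n and R₁, …, R_N Hermitian n×n complex matrices with cost operator C. Then the infimum over couplings Π between ρ and σ of (Tr(C * Π)).re equals the infimum over couplings Π' between σ and ρ of (Tr(C * Π')).re. -/
open Matrix
open scoped ComplexOrder

noncomputable section

/-
Exchanging the two tensor factors and transposing, `Π ↦ (SΠS)ᵀ` with `S` the swap, maps couplings
between `ρ` and `σ` bijectively onto couplings between `σ` and `ρ`. Conjugating
`Rₛ ⊗ I − I ⊗ Rₛᵀ` by `S` gives its negative transpose, so `SCS = Cᵀ` and the cost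
`Tr(C (SΠS)ᵀ) = Tr(SΠS Cᵀ) = Tr(S (Π C) S)` is unchanged. Hence both infima range over the same set.
-/

lemma Matrix.trace_reindex {m n α : Type*} [Fintype m] [Fintype n] [AddCommMonoid α]
    (e : m ≃ n) (M : Matrix m m α) : trace (reindex e e M) = trace M :=
  Fintype.sum_equiv e.symm _ _ fun _ => rfl

section

variable {ι κ : Type*} [Fintype ι]

lemma IsCoupling.reindex_swap_transpose {ρ σ : Matrix ι ι ℂ} {P : Matrix (ι × ι) (ι × ι) ℂ}
    (hP : IsCoupling ρ σ P) : IsCoupling σ ρ (reindex (.prodComm ι ι) (.prodComm ι ι) P)ᵀ := by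
  obtain ⟨hpsd, htr, hleft, hright⟩ := hP
  refine ⟨(hpsd.submatrix _).transpose, ?_, fun j l => ?_, fun i k => ?_⟩
  · rw [trace_transpose, trace_reindex, htr]
  · simpa using hright l j
  · simpa using hleft k i

variable [DecidableEq ι] [Fintype κ]

lemma reindex_swap_costOp (R : κ → Matrix ι ι ℂ) :
    reindex (.prodComm ι ι) (.prodComm ι ι) (costOp R) = (costOp R)ᵀ := by
  let X : κ → Matrix (ι × ι) (ι × ι) ℂ := fun s => Matrix.of fun p q =>
    R s p.1 q.1 * (if p.2 = q.2 then 1 else 0) - (if p.1 = q.1 then 1 else 0) * R s q.2 p.2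
  have reindex_X : ∀ s, reindex (.prodComm ι ι) (.prodComm ι ι) (X s) = -(X s)ᵀ := by
    intro s
    ext ⟨a₁, a₂⟩ ⟨b₁, b₂⟩
    simp only [X, reindex_apply, submatrix_apply, Equiv.prodComm_symm, Equiv.prodComm_apply,
      Prod.swap_prod_mk, Matrix.neg_apply, transpose_apply, of_apply]
    simp only [eq_comm (a := b₁), eq_comm (a := b₂)]
    ring
  calc reindex (.prodComm ι ι) (.prodComm ι ι) (costOp R)
      = reindexAlgEquiv ℂ ℂ (.prodComm ι ι) (∑ s, X s ^ 2) := rfl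
    _ = ∑ s, (-(X s)ᵀ) ^ 2 := by simp only [map_sum, map_pow, coe_reindexAlgEquiv, reindex_X]
    _ = (costOp R)ᵀ := by simp only [neg_sq, ← transpose_pow, ← transpose_sum]; rfl

lemma trace_costOp_mul_reindex_swap_transpose (R : κ → Matrix ι ι ℂ)
    (P : Matrix (ι × ι) (ι × ι) ℂ) :
    trace (costOp R * (reindex (.prodComm ι ι) (.prodComm ι ι) P)ᵀ) = trace (costOp R * P) := by
  calc trace (costOp R * (reindex (.prodComm ι ι) (.prodComm ι ι) P)ᵀ)
      = trace (reindex (.prodComm ι ι) (.prodComm ι ι) P * (costOp R)ᵀ) := by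
        rw [← trace_transpose, transpose_mul, transpose_transpose]
    _ = trace (reindex (.prodComm ι ι) (.prodComm ι ι) (P * costOp R)) := by
        rw [← reindex_swap_costOp, ← coe_reindexAlgEquiv ℂ ℂ, map_mul]
    _ = trace (costOp R * P) := by rw [trace_reindex, trace_mul_comm]

end

theorem quantum_wasserstein_symm_general {n N : ℕ}
    (ρ σ : Matrix (Fin n) (Fin n) ℂ)
    (R : Fin N → Matrix (Fin n) (Fin n) ℂ) :
    sInf {x : ℝ | ∃ P, IsCoupling ρ σ P ∧ x = (Matrix.trace (costOp R * P)).re}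
      = sInf {x : ℝ | ∃ P', IsCoupling σ ρ P' ∧ x = (Matrix.trace (costOp R * P')).re} := by
  have costs_subset : ∀ ρ' σ' : Matrix (Fin n) (Fin n) ℂ,
      {x : ℝ | ∃ P, IsCoupling ρ' σ' P ∧ x = (trace (costOp R * P)).re} ⊆
        {x : ℝ | ∃ P', IsCoupling σ' ρ' P' ∧ x = (trace (costOp R * P')).re} := by
    rintro ρ' σ' _ ⟨P, hP, rfl⟩
    exact ⟨_, hP.reindex_swap_transpose, by rw [trace_costOp_mul_reindex_swap_transpose]⟩
  rw [(costs_subset ρ σ).antisymm (costs_subset σ ρ)]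

/-- **Symmetry of the quantum Wasserstein distance** (Remark 3.5). -/
theorem quantum_wasserstein_symm {n N : ℕ}
    (ρ σ : Matrix (Fin n) (Fin n) ℂ) (hρ : IsDensity ρ) (hσ : IsDensity σ)
    (R : Fin N → Matrix (Fin n) (Fin n) ℂ) (hR : ∀ s, (R s).IsHermitian) :
    sInf {x : ℝ | ∃ P, IsCoupling ρ σ P ∧ x = (Matrix.trace (costOp R * P)).re}
      = sInf {x : ℝ | ∃ P', IsCoupling σ ρ P' ∧ x = (Matrix.trace (costOp R * P')).re} :=
  quantum_wasserstein_symm_general ρ σ R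
end
end

section
/- Additivity with respect to tensor products (Proposition 3.6): let R¹₁, …, R¹_{N₁} be Hermitian n₁×n₁ complex matrices and R²₁, …, R²_{N₂} Hermitian n₂×n₂ complex matrices. On the composite system indexed by Fin n₁ × Fin n₂, consider the family of Hermitian matrices consisting of the R¹ₛ ⊗ I (Kronecker products with the identity on the second factor) together with the I ⊗ R²ₜ, and let C be the associated cost operator; let C₁, C₂ be the cost operators of the two families on their own systems. Then for all density matrices ρ₁, σ₁ of size n₁ and ρ₂, σ₂ of size n₂: the infimum over couplings Π between ρ₁ ⊗ ρ₂ and σ₁ ⊗ σ₂ (Kronecker products, viewed as matrices indexed by Fin n₁ × Fin n₂) of (Tr(C * Π)).re equals the infimum over couplings Π₁ between ρ₁ and σ₁ of (Tr(C₁ * Π₁)).re plus the infimum over couplings Π₂ between ρ₂ and σ₂ of (Tr(C₂ * Π₂)).re. -/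
open Matrix
open scoped ComplexOrder

noncomputable section

open Kronecker

/-!
Reordering the four tensor factors of the composite system, from `(ι₁ × ι₂) × (ι₁ × ι₂)` to
`(ι₁ × ι₁) × (ι₂ × ι₂)`, turns the composite cost operator into `C₁ ⊗ I + I ⊗ C₂`. Hence the cost
of a coupling `Π` of `ρ₁ ⊗ ρ₂` and `σ₁ ⊗ σ₂` is the sum of the costs of its two reduced couplings
(partial traces over one subsystem), and these are couplings of `ρ₁, σ₁` and of `ρ₂, σ₂`.
Conversely the tensor product of couplings `Π₁ ⊗ Π₂` couples the product states, at cost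
`Tr(C₁ Π₁) + Tr(C₂ Π₂)`. So the composite costs form the Minkowski sum of the two sets of costs;
these sets are nonempty (`σ ⊗ ρᵀ` is a coupling) and bounded below by `0` (`C` is positive
semidefinite), so their infima add.
-/

namespace Matrix

variable {m n m' n' α : Type*}

section PartialTrace

section AddCommMonoid

variable [AddCommMonoid α]

def partialTraceLeft [Fintype m] (Z : Matrix (m × n) (m × n) α) : Matrix n n α :=
  of fun i j => ∑ k, Z (k, i) (k, j)

def partialTraceRight [Fintype n] (Z : Matrix (m × n) (m × n) α) : Matrix m m α :=
  of fun i j => ∑ k, Z (i, k) (j, k)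

@[simp]
lemma partialTraceLeft_apply [Fintype m] (Z : Matrix (m × n) (m × n) α) (i j : n) :
    partialTraceLeft Z i j = ∑ k, Z (k, i) (k, j) := rfl

@[simp]
lemma partialTraceRight_apply [Fintype n] (Z : Matrix (m × n) (m × n) α) (i j : m) :
    partialTraceRight Z i j = ∑ k, Z (i, k) (j, k) := rfl

@[simp]
lemma trace_partialTraceLeft [Fintype m] [Fintype n] (Z : Matrix (m × n) (m × n) α) :
    (partialTraceLeft Z).trace = Z.trace := by
  simp only [trace, diag, partialTraceLeft_apply, Fintype.sum_prod_type]
  exact Finset.sum_comm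

@[simp]
lemma trace_partialTraceRight [Fintype m] [Fintype n] (Z : Matrix (m × n) (m × n) α) :
    (partialTraceRight Z).trace = Z.trace := by
  simp [trace, Fintype.sum_prod_type]

lemma partialTraceLeft_partialTraceRight_submatrix_prodProdProdComm [Fintype m] [Fintype n]
    [Fintype n'] (Z : Matrix ((m × n) × (m' × n')) ((m × n) × (m' × n')) α) :
    partialTraceLeft (partialTraceRight (Z.submatrix (Equiv.prodProdProdComm m m' n n')
      (Equiv.prodProdProdComm m m' n n'))) = partialTraceRight (partialTraceLeft Z) := by
  ext i j
  simp only [partialTraceLeft_apply, partialTraceRight_apply, submatrix_apply,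
    Equiv.prodProdProdComm_apply, Fintype.sum_prod_type]
  exact (Finset.sum_congr rfl fun _ _ => Finset.sum_comm).trans Finset.sum_comm

lemma partialTraceRight_partialTraceRight_submatrix_prodProdProdComm [Fintype m'] [Fintype n]
    [Fintype n'] (Z : Matrix ((m × n) × (m' × n')) ((m × n) × (m' × n')) α) :
    partialTraceRight (partialTraceRight (Z.submatrix (Equiv.prodProdProdComm m m' n n')
      (Equiv.prodProdProdComm m m' n n'))) = partialTraceRight (partialTraceRight Z) := by
  ext i j
  simp only [partialTraceRight_apply, submatrix_apply, Equiv.prodProdProdComm_apply,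
    Fintype.sum_prod_type]
  exact Finset.sum_comm

lemma partialTraceLeft_partialTraceLeft_submatrix_prodProdProdComm [Fintype m] [Fintype m']
    [Fintype n] (Z : Matrix ((m × n) × (m' × n')) ((m × n) × (m' × n')) α) :
    partialTraceLeft (partialTraceLeft (Z.submatrix (Equiv.prodProdProdComm m m' n n')
      (Equiv.prodProdProdComm m m' n n'))) = partialTraceLeft (partialTraceLeft Z) := by
  ext i j
  simp only [partialTraceLeft_apply, submatrix_apply, Equiv.prodProdProdComm_apply,
    Fintype.sum_prod_type]
  rw [Finset.sum_comm_cycle]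
  exact Finset.sum_congr rfl fun _ _ => Finset.sum_comm

lemma partialTraceRight_partialTraceLeft_submatrix_prodProdProdComm [Fintype m] [Fintype m']
    [Fintype n'] (Z : Matrix ((m × n) × (m' × n')) ((m × n) × (m' × n')) α) :
    partialTraceRight (partialTraceLeft (Z.submatrix (Equiv.prodProdProdComm m m' n n')
      (Equiv.prodProdProdComm m m' n n'))) = partialTraceLeft (partialTraceRight Z) := by
  ext i j
  simp only [partialTraceLeft_apply, partialTraceRight_apply, submatrix_apply,
    Equiv.prodProdProdComm_apply, Fintype.sum_prod_type]
  exact Finset.sum_comm_cycle.symm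

end AddCommMonoid

section CommSemiring

variable [CommSemiring α]

@[simp]
lemma partialTraceLeft_kronecker [Fintype m] (A : Matrix m m α) (B : Matrix n n α) :
    partialTraceLeft (A ⊗ₖ B) = A.trace • B := by
  ext i j
  simp [trace, Finset.sum_mul]

@[simp]
lemma partialTraceRight_kronecker [Fintype n] (A : Matrix m m α) (B : Matrix n n α) :
    partialTraceRight (A ⊗ₖ B) = B.trace • A := by
  ext i j
  simp [trace, Finset.mul_sum, mul_comm]

lemma partialTraceLeft_submatrix_prodProdProdComm_kronecker [Fintype m] [Fintype n]
    (A : Matrix (m × m') (m × m') α) (B : Matrix (n × n') (n × n') α) :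
    partialTraceLeft ((A ⊗ₖ B).submatrix (Equiv.prodProdProdComm m n m' n')
      (Equiv.prodProdProdComm m n m' n')) = partialTraceLeft A ⊗ₖ partialTraceLeft B := by
  ext ⟨i, i'⟩ ⟨j, j'⟩
  simp [Fintype.sum_prod_type, Finset.sum_mul_sum]

lemma partialTraceRight_submatrix_prodProdProdComm_kronecker [Fintype m'] [Fintype n']
    (A : Matrix (m × m') (m × m') α) (B : Matrix (n × n') (n × n') α) :
    partialTraceRight ((A ⊗ₖ B).submatrix (Equiv.prodProdProdComm m n m' n')
      (Equiv.prodProdProdComm m n m' n')) = partialTraceRight A ⊗ₖ partialTraceRight B := by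
  ext ⟨i, i'⟩ ⟨j, j'⟩
  simp [Fintype.sum_prod_type, Finset.sum_mul_sum]

lemma trace_kronecker_one_mul [Fintype m] [Fintype n] [DecidableEq n] (Y : Matrix m m α)
    (Z : Matrix (m × n) (m × n) α) :
    ((Y ⊗ₖ (1 : Matrix n n α)) * Z).trace = (Y * partialTraceRight Z).trace := by
  simp only [trace, diag_apply, mul_apply, kroneckerMap_apply, one_apply, mul_ite, mul_one,
    mul_zero, ite_mul, zero_mul, Fintype.sum_prod_type, Finset.sum_ite_eq, Finset.mem_univ,
    ↓reduceIte, partialTraceRight_apply, Finset.mul_sum]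
  exact Finset.sum_congr rfl fun _ _ => Finset.sum_comm

lemma trace_one_kronecker_mul [Fintype m] [Fintype n] [DecidableEq m] (Y : Matrix n n α)
    (Z : Matrix (m × n) (m × n) α) :
    (((1 : Matrix m m α) ⊗ₖ Y) * Z).trace = (Y * partialTraceLeft Z).trace := by
  simp only [trace, diag_apply, mul_apply, kroneckerMap_apply, one_apply, ite_mul, one_mul,
    zero_mul, Fintype.sum_prod_type, Finset.sum_ite_irrel, Finset.sum_const_zero,
    Finset.sum_ite_eq, Finset.mem_univ, ↓reduceIte, partialTraceLeft_apply, Finset.mul_sum]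
  exact Finset.sum_comm_cycle.symm

end CommSemiring

section PosSemidef

variable [Ring α] [PartialOrder α] [StarRing α] [AddLeftMono α]

lemma PosSemidef.partialTraceLeft [Fintype m] {Z : Matrix (m × n) (m × n) α}
    (hZ : Z.PosSemidef) : (Matrix.partialTraceLeft Z).PosSemidef := by
  have : Matrix.partialTraceLeft Z = ∑ k, Z.submatrix (k, ·) (k, ·) := by
    ext i j; simp [sum_apply]
  exact this ▸ posSemidef_sum _ fun k _ => hZ.submatrix _

lemma PosSemidef.partialTraceRight [Fintype n] {Z : Matrix (m × n) (m × n) α}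
    (hZ : Z.PosSemidef) : (Matrix.partialTraceRight Z).PosSemidef := by
  have : Matrix.partialTraceRight Z = ∑ k, Z.submatrix (·, k) (·, k) := by
    ext i j; simp [sum_apply]
  exact this ▸ posSemidef_sum _ fun k _ => hZ.submatrix _

end PosSemidef

end PartialTrace

lemma kronecker_submatrix_prodProdProdComm [CommSemigroup α] (A : Matrix m m α)
    (B : Matrix n n α) (C : Matrix m' m' α) (D : Matrix n' n' α) :
    ((A ⊗ₖ B) ⊗ₖ (C ⊗ₖ D)).submatrix (Equiv.prodProdProdComm m m' n n')
      (Equiv.prodProdProdComm m m' n n') = (A ⊗ₖ C) ⊗ₖ (B ⊗ₖ D) := by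
  ext i j
  simp [mul_mul_mul_comm]

lemma sub_kronecker {p : Type*} [NonUnitalNonAssocRing α] (A₁ A₂ : Matrix m n α)
    (B : Matrix m' p α) : (A₁ - A₂) ⊗ₖ B = A₁ ⊗ₖ B - A₂ ⊗ₖ B := by
  ext i j
  simp [sub_mul]

lemma kronecker_sub {p : Type*} [NonUnitalNonAssocRing α] (A : Matrix m n α)
    (B₁ B₂ : Matrix m' p α) : A ⊗ₖ (B₁ - B₂) = A ⊗ₖ B₁ - A ⊗ₖ B₂ := by
  ext i j
  simp [mul_sub]

lemma trace_submatrix_equiv [Fintype m] [Fintype n] [AddCommMonoid α] (A : Matrix n n α)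
    (e : m ≃ n) : (A.submatrix e e).trace = A.trace :=
  e.sum_comp fun i => A i i

lemma trace_submatrix_mul_equiv [Fintype m] [Fintype n] [NonUnitalNonAssocSemiring α]
    (A : Matrix n n α) (B : Matrix m m α) (e : m ≃ n) :
    (A.submatrix e e * B).trace = (A * B.submatrix e.symm e.symm).trace := by
  have hB : B = (B.submatrix e.symm e.symm).submatrix e e := by simp
  conv_lhs => rw [hB, submatrix_mul_equiv, trace_submatrix_equiv]

open scoped MatrixOrder in
lemma PosSemidef.trace_mul_nonneg {𝕜 : Type*} [RCLike 𝕜] [Fintype n] {A B : Matrix n n 𝕜}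
    (hA : A.PosSemidef) (hB : B.PosSemidef) : 0 ≤ (A * B).trace := by
  classical
  obtain ⟨C, rfl⟩ := CStarAlgebra.nonneg_iff_eq_star_mul_self.mp hA.nonneg
  rw [star_eq_conjTranspose, Matrix.mul_assoc, trace_mul_comm]
  exact (hB.mul_mul_conjTranspose_same C).trace_nonneg

end Matrix

def costTerm {ι : Type*} [DecidableEq ι] (R : Matrix ι ι ℂ) : Matrix (ι × ι) (ι × ι) ℂ :=
  R ⊗ₖ 1 - 1 ⊗ₖ Rᵀ

section CostOperator

variable {ι ι₁ ι₂ κ κ₁ κ₂ : Type*} [DecidableEq ι] [DecidableEq ι₁] [DecidableEq ι₂]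

lemma costOp_eq_sum_sq [Fintype ι] [Fintype κ] (R : κ → Matrix ι ι ℂ) :
    costOp R = ∑ s, costTerm (R s) ^ 2 :=
  rfl

lemma costOp_sumElim [Fintype ι] [Fintype κ₁] [Fintype κ₂] (R₁ : κ₁ → Matrix ι ι ℂ)
    (R₂ : κ₂ → Matrix ι ι ℂ) : costOp (Sum.elim R₁ R₂) = costOp R₁ + costOp R₂ :=
  Fintype.sum_sum_type _

lemma costTerm_isHermitian {R : Matrix ι ι ℂ} (hR : R.IsHermitian) : (costTerm R).IsHermitian := by
  simp [costTerm, IsHermitian, conjTranspose_kronecker, hR.eq, hR.transpose.eq]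

lemma costOp_posSemidef [Fintype ι] [Fintype κ] {R : κ → Matrix ι ι ℂ}
    (hR : ∀ s, (R s).IsHermitian) : (costOp R).PosSemidef := by
  rw [costOp_eq_sum_sq]
  refine posSemidef_sum _ fun s _ => ?_
  simpa [sq, (costTerm_isHermitian (hR s)).eq] using
    posSemidef_conjTranspose_mul_self (costTerm (R s))

lemma costTerm_kronecker_one (R : Matrix ι₁ ι₁ ℂ) :
    costTerm (R ⊗ₖ (1 : Matrix ι₂ ι₂ ℂ)) =
      (costTerm R ⊗ₖ (1 : Matrix (ι₂ × ι₂) (ι₂ × ι₂) ℂ)).submatrix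
        (Equiv.prodProdProdComm ι₁ ι₂ ι₁ ι₂) (Equiv.prodProdProdComm ι₁ ι₂ ι₁ ι₂) := by
  simp only [costTerm, ← one_kronecker_one, ← kroneckerMap_transpose, transpose_one,
    sub_kronecker, submatrix_sub, Pi.sub_apply, kronecker_submatrix_prodProdProdComm]

lemma costTerm_one_kronecker (R : Matrix ι₂ ι₂ ℂ) :
    costTerm ((1 : Matrix ι₁ ι₁ ℂ) ⊗ₖ R) =
      ((1 : Matrix (ι₁ × ι₁) (ι₁ × ι₁) ℂ) ⊗ₖ costTerm R).submatrix
        (Equiv.prodProdProdComm ι₁ ι₂ ι₁ ι₂) (Equiv.prodProdProdComm ι₁ ι₂ ι₁ ι₂) := by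
  simp only [costTerm, ← one_kronecker_one, ← kroneckerMap_transpose, transpose_one,
    kronecker_sub, submatrix_sub, Pi.sub_apply, kronecker_submatrix_prodProdProdComm]

variable [Fintype ι₁] [Fintype ι₂] [Fintype κ]

lemma costOp_kronecker_one (R : κ → Matrix ι₁ ι₁ ℂ) :
    costOp (fun s => R s ⊗ₖ (1 : Matrix ι₂ ι₂ ℂ)) =
      (costOp R ⊗ₖ (1 : Matrix (ι₂ × ι₂) (ι₂ × ι₂) ℂ)).submatrix
        (Equiv.prodProdProdComm ι₁ ι₂ ι₁ ι₂) (Equiv.prodProdProdComm ι₁ ι₂ ι₁ ι₂) := by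
  simp only [costOp_eq_sum_sq, costTerm_kronecker_one, sq, submatrix_mul_equiv,
    ← mul_kronecker_mul, Matrix.one_mul]
  ext i j
  simp [Matrix.sum_apply, Finset.sum_mul]

lemma costOp_one_kronecker (R : κ → Matrix ι₂ ι₂ ℂ) :
    costOp (fun s => (1 : Matrix ι₁ ι₁ ℂ) ⊗ₖ R s) =
      ((1 : Matrix (ι₁ × ι₁) (ι₁ × ι₁) ℂ) ⊗ₖ costOp R).submatrix
        (Equiv.prodProdProdComm ι₁ ι₂ ι₁ ι₂) (Equiv.prodProdProdComm ι₁ ι₂ ι₁ ι₂) := by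
  simp only [costOp_eq_sum_sq, costTerm_one_kronecker, sq, submatrix_mul_equiv,
    ← mul_kronecker_mul, Matrix.one_mul]
  ext i j
  simp [Matrix.sum_apply, Finset.mul_sum]

end CostOperator

section Composite

variable {ι₁ ι₂ : Type*}

def traceOutFst [Fintype ι₁] (P : Matrix ((ι₁ × ι₂) × (ι₁ × ι₂)) ((ι₁ × ι₂) × (ι₁ × ι₂)) ℂ) :
    Matrix (ι₂ × ι₂) (ι₂ × ι₂) ℂ :=
  partialTraceLeft (P.submatrix (Equiv.prodProdProdComm ι₁ ι₁ ι₂ ι₂)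
    (Equiv.prodProdProdComm ι₁ ι₁ ι₂ ι₂))

def traceOutSnd [Fintype ι₂] (P : Matrix ((ι₁ × ι₂) × (ι₁ × ι₂)) ((ι₁ × ι₂) × (ι₁ × ι₂)) ℂ) :
    Matrix (ι₁ × ι₁) (ι₁ × ι₁) ℂ :=
  partialTraceRight (P.submatrix (Equiv.prodProdProdComm ι₁ ι₁ ι₂ ι₂)
    (Equiv.prodProdProdComm ι₁ ι₁ ι₂ ι₂))

def tensorCoupling (P₁ : Matrix (ι₁ × ι₁) (ι₁ × ι₁) ℂ) (P₂ : Matrix (ι₂ × ι₂) (ι₂ × ι₂) ℂ) :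
    Matrix ((ι₁ × ι₂) × (ι₁ × ι₂)) ((ι₁ × ι₂) × (ι₁ × ι₂)) ℂ :=
  (P₁ ⊗ₖ P₂).submatrix (Equiv.prodProdProdComm ι₁ ι₂ ι₁ ι₂) (Equiv.prodProdProdComm ι₁ ι₂ ι₁ ι₂)

lemma traceOutFst_tensorCoupling [Fintype ι₁] (P₁ : Matrix (ι₁ × ι₁) (ι₁ × ι₁) ℂ)
    (P₂ : Matrix (ι₂ × ι₂) (ι₂ × ι₂) ℂ) : traceOutFst (tensorCoupling P₁ P₂) = P₁.trace • P₂ := by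
  rw [traceOutFst, tensorCoupling, ← Equiv.prodProdProdComm_symm ι₁ ι₂ ι₁ ι₂, submatrix_submatrix,
    Equiv.self_comp_symm, submatrix_id_id, partialTraceLeft_kronecker]

lemma traceOutSnd_tensorCoupling [Fintype ι₂] (P₁ : Matrix (ι₁ × ι₁) (ι₁ × ι₁) ℂ)
    (P₂ : Matrix (ι₂ × ι₂) (ι₂ × ι₂) ℂ) : traceOutSnd (tensorCoupling P₁ P₂) = P₂.trace • P₁ := by
  rw [traceOutSnd, tensorCoupling, ← Equiv.prodProdProdComm_symm ι₁ ι₂ ι₁ ι₂, submatrix_submatrix,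
    Equiv.self_comp_symm, submatrix_id_id, partialTraceRight_kronecker]

lemma trace_costOp_mul {κ₁ κ₂ : Type*} [Fintype ι₁] [DecidableEq ι₁] [Fintype ι₂] [DecidableEq ι₂]
    [Fintype κ₁] [Fintype κ₂] (R₁ : κ₁ → Matrix ι₁ ι₁ ℂ) (R₂ : κ₂ → Matrix ι₂ ι₂ ℂ)
    (P : Matrix ((ι₁ × ι₂) × (ι₁ × ι₂)) ((ι₁ × ι₂) × (ι₁ × ι₂)) ℂ) :
    (costOp (Sum.elim (fun s => R₁ s ⊗ₖ (1 : Matrix ι₂ ι₂ ℂ))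
        (fun t => (1 : Matrix ι₁ ι₁ ℂ) ⊗ₖ R₂ t)) * P).trace =
      (costOp R₁ * traceOutSnd P).trace + (costOp R₂ * traceOutFst P).trace := by
  rw [costOp_sumElim, costOp_kronecker_one, costOp_one_kronecker, Matrix.add_mul, trace_add,
    trace_submatrix_mul_equiv, trace_submatrix_mul_equiv, Equiv.prodProdProdComm_symm,
    trace_kronecker_one_mul, trace_one_kronecker_mul, traceOutSnd, traceOutFst]

end Composite

section Coupling

variable {ι ι₁ ι₂ : Type*} [Fintype ι] [Fintype ι₁] [Fintype ι₂]

lemma isCoupling_iff {ρ σ : Matrix ι ι ℂ} {P : Matrix (ι × ι) (ι × ι) ℂ} :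
    IsCoupling ρ σ P ↔
      P.PosSemidef ∧ P.trace = 1 ∧ partialTraceLeft P = ρᵀ ∧ partialTraceRight P = σ := by
  simp only [IsCoupling, ← Matrix.ext_iff, partialTraceLeft_apply, partialTraceRight_apply,
    transpose_apply]

lemma isCoupling_kronecker_transpose {ρ σ : Matrix ι ι ℂ} (hρ : IsDensity ρ) (hσ : IsDensity σ) :
    IsCoupling ρ σ (σ ⊗ₖ ρᵀ) :=
  isCoupling_iff.mpr ⟨hσ.1.kronecker hρ.1.transpose, by simp [trace_kronecker, hσ.2, hρ.2],
    by simp [hσ.2], by simp [hρ.2]⟩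

variable {ρ₁ σ₁ : Matrix ι₁ ι₁ ℂ} {ρ₂ σ₂ : Matrix ι₂ ι₂ ℂ}

lemma IsCoupling.tensorCoupling {P₁ : Matrix (ι₁ × ι₁) (ι₁ × ι₁) ℂ}
    {P₂ : Matrix (ι₂ × ι₂) (ι₂ × ι₂) ℂ} (h₁ : IsCoupling ρ₁ σ₁ P₁) (h₂ : IsCoupling ρ₂ σ₂ P₂) :
    IsCoupling (ρ₁ ⊗ₖ ρ₂) (σ₁ ⊗ₖ σ₂) (tensorCoupling P₁ P₂) := by
  obtain ⟨hP₁, htr₁, hl₁, hr₁⟩ := isCoupling_iff.mp h₁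
  obtain ⟨hP₂, htr₂, hl₂, hr₂⟩ := isCoupling_iff.mp h₂
  refine isCoupling_iff.mpr ⟨(hP₁.kronecker hP₂).submatrix _, ?_, ?_, ?_⟩
  · rw [_root_.tensorCoupling, trace_submatrix_equiv, trace_kronecker, htr₁, htr₂, one_mul]
  · rw [_root_.tensorCoupling, partialTraceLeft_submatrix_prodProdProdComm_kronecker, hl₁, hl₂,
      kroneckerMap_transpose]
  · rw [_root_.tensorCoupling, partialTraceRight_submatrix_prodProdProdComm_kronecker, hr₁, hr₂]

variable {P : Matrix ((ι₁ × ι₂) × (ι₁ × ι₂)) ((ι₁ × ι₂) × (ι₁ × ι₂)) ℂ}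

lemma IsCoupling.traceOutFst (h : IsCoupling (ρ₁ ⊗ₖ ρ₂) (σ₁ ⊗ₖ σ₂) P) (hρ₁ : ρ₁.trace = 1)
    (hσ₁ : σ₁.trace = 1) : IsCoupling ρ₂ σ₂ (traceOutFst P) := by
  obtain ⟨hP, htr, hl, hr⟩ := isCoupling_iff.mp h
  refine isCoupling_iff.mpr ⟨hP.submatrix _ |>.partialTraceLeft, ?_, ?_, ?_⟩
  · rw [_root_.traceOutFst, trace_partialTraceLeft, trace_submatrix_equiv, htr]
  · rw [_root_.traceOutFst, partialTraceLeft_partialTraceLeft_submatrix_prodProdProdComm, hl,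
      ← kroneckerMap_transpose, partialTraceLeft_kronecker, trace_transpose, hρ₁, one_smul]
  · rw [_root_.traceOutFst, partialTraceRight_partialTraceLeft_submatrix_prodProdProdComm, hr,
      partialTraceLeft_kronecker, hσ₁, one_smul]

lemma IsCoupling.traceOutSnd (h : IsCoupling (ρ₁ ⊗ₖ ρ₂) (σ₁ ⊗ₖ σ₂) P) (hρ₂ : ρ₂.trace = 1)
    (hσ₂ : σ₂.trace = 1) : IsCoupling ρ₁ σ₁ (traceOutSnd P) := by
  obtain ⟨hP, htr, hl, hr⟩ := isCoupling_iff.mp h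
  refine isCoupling_iff.mpr ⟨hP.submatrix _ |>.partialTraceRight, ?_, ?_, ?_⟩
  · rw [_root_.traceOutSnd, trace_partialTraceRight, trace_submatrix_equiv, htr]
  · rw [_root_.traceOutSnd, partialTraceLeft_partialTraceRight_submatrix_prodProdProdComm, hl,
      ← kroneckerMap_transpose, partialTraceRight_kronecker, trace_transpose, hρ₂, one_smul]
  · rw [_root_.traceOutSnd, partialTraceRight_partialTraceRight_submatrix_prodProdProdComm, hr,
      partialTraceRight_kronecker, hσ₂, one_smul]

end Coupling

section CouplingCosts

variable {ι ι₁ ι₂ κ κ₁ κ₂ : Type*} [Fintype ι] [DecidableEq ι] [Fintype κ]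

def couplingCosts (R : κ → Matrix ι ι ℂ) (ρ σ : Matrix ι ι ℂ) : Set ℝ :=
  {x | ∃ P, IsCoupling ρ σ P ∧ x = (Matrix.trace (costOp R * P)).re}

lemma couplingCosts_nonempty (R : κ → Matrix ι ι ℂ) {ρ σ : Matrix ι ι ℂ} (hρ : IsDensity ρ)
    (hσ : IsDensity σ) : (couplingCosts R ρ σ).Nonempty :=
  ⟨_, _, isCoupling_kronecker_transpose hρ hσ, rfl⟩

lemma bddBelow_couplingCosts {R : κ → Matrix ι ι ℂ} (hR : ∀ s, (R s).IsHermitian)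
    (ρ σ : Matrix ι ι ℂ) : BddBelow (couplingCosts R ρ σ) := by
  refine ⟨0, ?_⟩
  rintro _ ⟨P, hP, rfl⟩
  exact (Complex.nonneg_iff.mp ((costOp_posSemidef hR).trace_mul_nonneg hP.1)).1

open scoped Pointwise in
lemma couplingCosts_sumElim_kronecker [Fintype ι₁] [DecidableEq ι₁] [Fintype ι₂] [DecidableEq ι₂]
    [Fintype κ₁] [Fintype κ₂] (R₁ : κ₁ → Matrix ι₁ ι₁ ℂ) (R₂ : κ₂ → Matrix ι₂ ι₂ ℂ)
    {ρ₁ σ₁ : Matrix ι₁ ι₁ ℂ} {ρ₂ σ₂ : Matrix ι₂ ι₂ ℂ} (hρ₁ : ρ₁.trace = 1) (hσ₁ : σ₁.trace = 1)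
    (hρ₂ : ρ₂.trace = 1) (hσ₂ : σ₂.trace = 1) :
    couplingCosts (Sum.elim (fun s => R₁ s ⊗ₖ (1 : Matrix ι₂ ι₂ ℂ))
        (fun t => (1 : Matrix ι₁ ι₁ ℂ) ⊗ₖ R₂ t)) (ρ₁ ⊗ₖ ρ₂) (σ₁ ⊗ₖ σ₂) =
      couplingCosts R₁ ρ₁ σ₁ + couplingCosts R₂ ρ₂ σ₂ := by
  ext x
  constructor
  · rintro ⟨P, hP, rfl⟩
    exact ⟨_, ⟨_, hP.traceOutSnd hρ₂ hσ₂, rfl⟩, _, ⟨_, hP.traceOutFst hρ₁ hσ₁, rfl⟩,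
      by rw [trace_costOp_mul, Complex.add_re]⟩
  · rintro ⟨_, ⟨P₁, hP₁, rfl⟩, _, ⟨P₂, hP₂, rfl⟩, rfl⟩
    refine ⟨tensorCoupling P₁ P₂, hP₁.tensorCoupling hP₂, ?_⟩
    rw [trace_costOp_mul, traceOutSnd_tensorCoupling, traceOutFst_tensorCoupling, hP₁.2.1,
      hP₂.2.1, one_smul, one_smul, Complex.add_re]

end CouplingCosts

/-- **Additivity with respect to tensor products** (Proposition 3.6). -/
theorem additivity_tensor_product {n₁ n₂ N₁ N₂ : ℕ}
    (R₁ : Fin N₁ → Matrix (Fin n₁) (Fin n₁) ℂ) (hR₁ : ∀ s, (R₁ s).IsHermitian)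
    (R₂ : Fin N₂ → Matrix (Fin n₂) (Fin n₂) ℂ) (hR₂ : ∀ t, (R₂ t).IsHermitian)
    (ρ₁ σ₁ : Matrix (Fin n₁) (Fin n₁) ℂ) (hρ₁ : IsDensity ρ₁) (hσ₁ : IsDensity σ₁)
    (ρ₂ σ₂ : Matrix (Fin n₂) (Fin n₂) ℂ) (hρ₂ : IsDensity ρ₂) (hσ₂ : IsDensity σ₂) :
    sInf {x : ℝ | ∃ P, IsCoupling (ρ₁ ⊗ₖ ρ₂) (σ₁ ⊗ₖ σ₂) P ∧
        x = (Matrix.trace (costOp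
          (Sum.elim (fun s => R₁ s ⊗ₖ (1 : Matrix (Fin n₂) (Fin n₂) ℂ))
                    (fun t => (1 : Matrix (Fin n₁) (Fin n₁) ℂ) ⊗ₖ R₂ t)) * P)).re}
      = sInf {x : ℝ | ∃ P₁, IsCoupling ρ₁ σ₁ P₁ ∧ x = (Matrix.trace (costOp R₁ * P₁)).re}
        + sInf {x : ℝ | ∃ P₂, IsCoupling ρ₂ σ₂ P₂ ∧ x = (Matrix.trace (costOp R₂ * P₂)).re} := by
  change sInf (couplingCosts _ _ _) = sInf (couplingCosts R₁ ρ₁ σ₁) + sInf (couplingCosts R₂ ρ₂ σ₂)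
  rw [couplingCosts_sumElim_kronecker R₁ R₂ hρ₁.2 hσ₁.2 hρ₂.2 hσ₂.2]
  exact csInf_add (couplingCosts_nonempty R₁ hρ₁ hσ₁) (bddBelow_couplingCosts hR₁ ρ₁ σ₁)
    (couplingCosts_nonempty R₂ hρ₂ hσ₂) (bddBelow_couplingCosts hR₂ ρ₂ σ₂)
end
end

section
/- Optimal transport cost between single-mode thermal Gaussian states (core of Theorem 4.3): let Δ = !![0, 1; -1, 0] and let J be the 4×4 complex matrix (Complex.I / 2) • Matrix.fromBlocks Δ 0 0 (−Δ) (entries coerced from ℝ to ℂ). For real numbers ν, ν' with 1/2 ≤ ν ≤ ν', the infimum of ν + ν' − (X 0 0 + X 1 1) over all real 2×2 matrices X such that both (Matrix.fromBlocks (ν' • 1) X Xᵀ (ν • 1), coerced to a complex 4×4 matrix) + J and the same matrix − J are positive semidefinite, equals (Real.sqrt (ν' + 1/2) − Real.sqrt (ν − 1/2))². -/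
open Matrix
open scoped ComplexOrder

noncomputable section

/-- The single-mode symplectic form `Δ = !![0, 1; -1, 0]`. -/
def Δsymp : Matrix (Fin 2) (Fin 2) ℝ := !![0, 1; -1, 0]

/-- The matrix `J = (i/2) • fromBlocks Δ 0 0 (−Δ)` appearing in the uncertainty
relation for couplings of single-mode states. -/
def Jmat : Matrix (Fin 2 ⊕ Fin 2) (Fin 2 ⊕ Fin 2) ℂ :=
  (Complex.I / 2) • (Matrix.fromBlocks Δsymp 0 0 (-Δsymp)).map Complex.ofReal

/-!
Write `M` for the coupling covariance matrix, `a = ν' + 1/2` and `b = ν - 1/2`, so that the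
claimed value is `a + b - 2√(ab)`. As `M` is real symmetric and `J` is imaginary antisymmetric,
`M + J = (M - J)ᵀ`, so only `M - J ≥ 0` matters. On the vectors `(u, iu, w, iw)` the form of
`M - J` is `2 (a u² + tr X · u w + b w²)`, so `(tr X)² ≤ 4ab` and the cost is at least
`(√a - √b)²`. Conversely, for `X = x • 1` with `x = √(ab)`, the eigenvectors `(1, ∓i)` of `iΔ`
split the form of `M - J` into two binary forms with matrices `[[a, x], [x, b]]` and
`[[a - 1, x], [x, b + 1]]`, both positive semidefinite because `x² = ab ≤ (a - 1)(b + 1)` when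
`ν ≤ ν'`.
-/

open Complex ComplexConjugate

lemma Δsymp_transpose : Δsympᵀ = -Δsymp := by
  ext i j
  fin_cases i <;> fin_cases j <;> simp [Δsymp]

lemma transpose_fromBlocks_Δsymp :
    (fromBlocks Δsymp 0 0 (-Δsymp))ᵀ = -fromBlocks Δsymp 0 0 (-Δsymp) := by
  rw [fromBlocks_transpose, transpose_neg, Δsymp_transpose, transpose_zero, fromBlocks_neg,
    neg_zero]

lemma Jmat_transpose : Jmatᵀ = -Jmat := by
  rw [Jmat, transpose_smul, ← transpose_map, transpose_fromBlocks_Δsymp,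
    Matrix.map_neg _ ofReal_neg, smul_neg]

lemma Jmat_isHermitian : Jmat.IsHermitian := by
  rw [IsHermitian, Jmat, conjTranspose_smul, ← conjTranspose_map _ fun _ => (conj_ofReal _).symm,
    conjTranspose_eq_transpose_of_trivial, transpose_fromBlocks_Δsymp,
    Matrix.map_neg _ ofReal_neg, smul_neg, ← neg_smul]
  congr 1
  simp [star_div₀, neg_div]

lemma binary_form_nonneg {a b x : ℝ} (ha : 0 ≤ a) (hb : 0 ≤ b) (hx : x ^ 2 ≤ a * b) (u w : ℂ) :
    0 ≤ a * normSq u + b * normSq w + 2 * x * (conj u * w).re := by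
  have hcross : |2 * x * (conj u * w).re| ≤ 2 * |x| * (‖u‖ * ‖w‖) := by
    rw [abs_mul, abs_mul, abs_two]
    gcongr
    simpa using abs_re_le_norm (conj u * w)
  have hamgm : 2 * |x| * (‖u‖ * ‖w‖) ≤ a * ‖u‖ ^ 2 + b * ‖w‖ ^ 2 := by
    refine le_of_abs_le (abs_le_of_sq_le_sq ?_ (by positivity))
    nlinarith [sq_nonneg (a * ‖u‖ ^ 2 - b * ‖w‖ ^ 2), sq_abs x, sq_nonneg (‖u‖ * ‖w‖)]
  rw [normSq_eq_norm_sq, normSq_eq_norm_sq]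
  linarith [neg_abs_le (2 * x * (conj u * w).re)]

/-- The complexified covariance matrix of a coupling of two single-mode states with covariance
matrices `ν' • 1` and `ν • 1`. -/
def couplingCov (ν ν' : ℝ) (X : Matrix (Fin 2) (Fin 2) ℝ) :
    Matrix (Fin 2 ⊕ Fin 2) (Fin 2 ⊕ Fin 2) ℂ :=
  (fromBlocks (ν' • 1) X Xᵀ (ν • 1)).map ofReal

section couplingCov

variable (ν ν' : ℝ) (X : Matrix (Fin 2) (Fin 2) ℝ)

lemma couplingCov_transpose : (couplingCov ν ν' X)ᵀ = couplingCov ν ν' X := by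
  rw [couplingCov, ← transpose_map, fromBlocks_transpose, transpose_transpose,
    transpose_smul, transpose_smul, transpose_one]

lemma isHermitian_couplingCov_sub_Jmat : (couplingCov ν ν' X - Jmat).IsHermitian := by
  refine IsHermitian.sub ?_ Jmat_isHermitian
  rw [IsHermitian, couplingCov, ← conjTranspose_map _ fun _ => (conj_ofReal _).symm,
    conjTranspose_eq_transpose_of_trivial, transpose_map, ← couplingCov, couplingCov_transpose]

lemma couplingCov_add_Jmat : couplingCov ν ν' X + Jmat = (couplingCov ν ν' X - Jmat)ᵀ := by
  rw [transpose_sub, couplingCov_transpose, Jmat_transpose, sub_neg_eq_add]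

lemma re_form_couplingCov_sub_Jmat_sumElim (u w : ℝ) :
    (star (Sum.elim ![(u : ℂ), u * I] ![(w : ℂ), w * I]) ⬝ᵥ
        (couplingCov ν ν' X - Jmat) *ᵥ Sum.elim ![(u : ℂ), u * I] ![(w : ℂ), w * I]).re =
      2 * (ν' + 1 / 2) * u ^ 2 + 2 * X.trace * u * w + 2 * (ν - 1 / 2) * w ^ 2 := by
  simp [couplingCov, dotProduct, mulVec, Fintype.sum_sum_type, Fin.sum_univ_two, Jmat, Δsymp,
    trace_fin_two]
  ring

lemma re_form_couplingCov_smul_one_sub_Jmat (x : ℝ) (z : Fin 2 ⊕ Fin 2 → ℂ) :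
    (star z ⬝ᵥ (couplingCov ν ν' (x • 1) - Jmat) *ᵥ z).re =
      ((ν' + 1 / 2) * normSq (z (.inl 0) - I * z (.inl 1))
          + (ν - 1 / 2) * normSq (z (.inr 0) - I * z (.inr 1))
          + 2 * x * (conj (z (.inl 0) - I * z (.inl 1)) * (z (.inr 0) - I * z (.inr 1))).re) / 2
        + ((ν' - 1 / 2) * normSq (z (.inl 0) + I * z (.inl 1))
          + (ν + 1 / 2) * normSq (z (.inr 0) + I * z (.inr 1))
          + 2 * x * (conj (z (.inl 0) + I * z (.inl 1)) * (z (.inr 0) + I * z (.inr 1))).re) / 2 := by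
  simp [couplingCov, dotProduct, mulVec, Fintype.sum_sum_type, Fin.sum_univ_two, Jmat, Δsymp,
    normSq_apply]
  ring

variable {ν ν' X}

lemma trace_sq_le_of_posSemidef (h : (couplingCov ν ν' X - Jmat).PosSemidef) :
    X.trace ^ 2 ≤ 4 * ((ν' + 1 / 2) * (ν - 1 / 2)) := by
  have hquad : ∀ u : ℝ, 0 ≤ 2 * (ν' + 1 / 2) * (u * u) + 2 * X.trace * u + 2 * (ν - 1 / 2) := by
    intro u
    have hre := (nonneg_iff.mp (h.dotProduct_mulVec_nonneg
      (Sum.elim ![(u : ℂ), u * I] ![((1 : ℝ) : ℂ), ((1 : ℝ) : ℂ) * I]))).1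
    rw [re_form_couplingCov_sub_Jmat_sumElim] at hre
    linarith
  have hdiscrim := discrim_le_zero hquad
  rw [discrim] at hdiscrim
  linarith

lemma posSemidef_couplingCov_smul_one_sub_Jmat {x : ℝ} (hν : 1 / 2 ≤ ν) (hν' : 1 / 2 ≤ ν')
    (hx₁ : x ^ 2 ≤ (ν' + 1 / 2) * (ν - 1 / 2)) (hx₂ : x ^ 2 ≤ (ν' - 1 / 2) * (ν + 1 / 2)) :
    (couplingCov ν ν' (x • 1) - Jmat).PosSemidef := by
  have hH := isHermitian_couplingCov_sub_Jmat ν ν' (x • 1)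
  refine .of_dotProduct_mulVec_nonneg hH fun z => nonneg_iff.mpr
    ⟨?_, (hH.im_star_dotProduct_mulVec_self z).symm⟩
  rw [re_form_couplingCov_smul_one_sub_Jmat]
  have h₁ := binary_form_nonneg (by linarith) (by linarith) hx₁
    (z (.inl 0) - I * z (.inl 1)) (z (.inr 0) - I * z (.inr 1))
  have h₂ := binary_form_nonneg (by linarith) (by linarith) hx₂
    (z (.inl 0) + I * z (.inl 1)) (z (.inr 0) + I * z (.inr 1))
  linarith

end couplingCov

/-- **Optimal transport cost between single-mode thermal Gaussian states**
(core of Theorem 4.3). -/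
theorem thermal_gaussian_optimal_cost (ν ν' : ℝ) (hν : 1 / 2 ≤ ν) (hνν' : ν ≤ ν') :
    sInf {c : ℝ | ∃ X : Matrix (Fin 2) (Fin 2) ℝ,
        ((Matrix.fromBlocks (ν' • 1) X Xᵀ (ν • 1)).map Complex.ofReal + Jmat).PosSemidef ∧
        ((Matrix.fromBlocks (ν' • 1) X Xᵀ (ν • 1)).map Complex.ofReal - Jmat).PosSemidef ∧
        c = ν + ν' - (X 0 0 + X 1 1)}
      = (Real.sqrt (ν' + 1 / 2) - Real.sqrt (ν - 1 / 2)) ^ 2 := by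
  have ha : 0 ≤ ν' + 1 / 2 := by linarith
  have hb : 0 ≤ ν - 1 / 2 := by linarith
  set x := √(ν' + 1 / 2) * √(ν - 1 / 2)
  have hx_sq : x ^ 2 = (ν' + 1 / 2) * (ν - 1 / 2) := by
    rw [mul_pow, Real.sq_sqrt ha, Real.sq_sqrt hb]
  have hcost : (√(ν' + 1 / 2) - √(ν - 1 / 2)) ^ 2 = ν + ν' - 2 * x := by
    rw [sub_sq, Real.sq_sqrt ha, Real.sq_sqrt hb]
    ring
  have hsub : (couplingCov ν ν' (x • 1) - Jmat).PosSemidef :=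
    posSemidef_couplingCov_smul_one_sub_Jmat hν (by linarith) hx_sq.le (by nlinarith)
  refine IsLeast.csInf_eq ⟨⟨x • 1, ?_, hsub, ?_⟩, ?_⟩
  · rw [← couplingCov, couplingCov_add_Jmat]
    exact hsub.transpose
  · simp only [hcost, Matrix.smul_apply, one_apply_eq, smul_eq_mul, mul_one]
    ring
  · rintro c ⟨X, -, hX, rfl⟩
    have htrace : X.trace ≤ 2 * x := le_of_abs_le <| abs_le_of_sq_le_sq
      (by nlinarith [trace_sq_le_of_posSemidef hX]) (by positivity)
    rw [trace_fin_two] at htrace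
    linarith
end
end

section
/- Symmetrization of feasible off-blocks (from the proof of Theorem 4.3): let Δ = !![0, 1; -1, 0] and J = (Complex.I / 2) • Matrix.fromBlocks Δ 0 0 (−Δ) as a complex 4×4 matrix. Let ν, ν' be real numbers with 1/2 ≤ ν ≤ ν' and let X be a real 2×2 matrix such that both (Matrix.fromBlocks (ν' • 1) X Xᵀ (ν • 1), coerced to a complex 4×4 matrix) + J and the same matrix − J are positive semidefinite. Then the same two positive semidefiniteness conditions hold with X replaced by ((X 0 0 + X 1 1) / 2) • 1. -/
open Matrix
open scoped ComplexOrder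

noncomputable section

/-!
The set of off-blocks `X` satisfying both uncertainty conditions is convex, since the conditions
are affine in `X` and the positive semidefinite cone is convex. It is also invariant under
`X ↦ Oᵀ X O` for orthogonal `O` with `Oᵀ Δ O = ±Δ`: conjugating by `O ⊕ O` keeps the diagonal
blocks and sends `J` to `±J`, so it keeps or swaps the two conditions. Averaging `X` first with
its conjugate by `Δ` and then with its conjugate by `diag(1, -1)` leaves `(tr X / 2) • 1`.
-/

def blockCov {n : Type*} [DecidableEq n] (ν' ν : ℝ) (X : Matrix n n ℝ) :
    Matrix (n ⊕ n) (n ⊕ n) ℝ :=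
  fromBlocks (ν' • 1) X Xᵀ (ν • 1)

section
variable {m n : Type*} [Fintype m]

theorem map_ofReal_conjTranspose_mul_mul (O : Matrix m n ℝ) (M : Matrix m m ℝ) :
    (O.map Complex.ofReal)ᴴ * M.map Complex.ofReal * O.map Complex.ofReal =
      (Oᵀ * M * O).map Complex.ofReal := by
  rw [← conjTranspose_map _ (fun _ => by simp), conjTranspose_eq_transpose_of_trivial]
  change _ = (Oᵀ * M * O).map Complex.ofRealHom
  rw [Matrix.map_mul, Matrix.map_mul]
  rfl

theorem Matrix.PosSemidef.conj_real [Fintype n] {O : Matrix m n ℝ} {A K : Matrix m m ℝ} {c : ℂ}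
    (h : (A.map Complex.ofReal + c • K.map Complex.ofReal).PosSemidef) :
    ((Oᵀ * A * O).map Complex.ofReal + c • (Oᵀ * K * O).map Complex.ofReal).PosSemidef := by
  have := h.conjTranspose_mul_mul_same (O.map Complex.ofReal)
  rwa [Matrix.mul_add, Matrix.add_mul, Matrix.mul_smul, Matrix.smul_mul,
    map_ofReal_conjTranspose_mul_mul, map_ofReal_conjTranspose_mul_mul] at this

end

theorem fromBlocks_diagonal_transpose_mul_mul {n R : Type*} [Fintype n] [CommSemiring R]
    (O A B C D : Matrix n n R) :
    (fromBlocks O 0 0 O)ᵀ * fromBlocks A B C D * fromBlocks O 0 0 O =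
      fromBlocks (Oᵀ * A * O) (Oᵀ * B * O) (Oᵀ * C * O) (Oᵀ * D * O) := by
  simp [fromBlocks_transpose, fromBlocks_multiply]

theorem blockCov_conj {n : Type*} [Fintype n] [DecidableEq n] {O : Matrix n n ℝ}
    (hO : Oᵀ * O = 1) (ν' ν : ℝ) (X : Matrix n n ℝ) :
    (fromBlocks O 0 0 O)ᵀ * blockCov ν' ν X * fromBlocks O 0 0 O = blockCov ν' ν (Oᵀ * X * O) := by
  rw [blockCov, blockCov, fromBlocks_diagonal_transpose_mul_mul]
  simp [Matrix.mul_assoc, hO, transpose_mul]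

theorem posSemidef_blockCov_conj {O : Matrix (Fin 2) (Fin 2) ℝ} (hO : Oᵀ * O = 1) {ν' ν : ℝ}
    {X : Matrix (Fin 2) (Fin 2) ℝ} {c : ℂ}
    (h : ((blockCov ν' ν X).map Complex.ofReal + c • Jmat).PosSemidef) :
    ((blockCov ν' ν (Oᵀ * X * O)).map Complex.ofReal + (c * (Complex.I / 2)) •
      (fromBlocks (Oᵀ * Δsymp * O) 0 0 (-(Oᵀ * Δsymp * O))).map Complex.ofReal).PosSemidef := by
  rw [Jmat, smul_smul] at h
  have := h.conj_real (O := fromBlocks O 0 0 O)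
  rwa [blockCov_conj hO, fromBlocks_diagonal_transpose_mul_mul, Matrix.mul_zero, Matrix.zero_mul,
    Matrix.mul_neg, Matrix.neg_mul] at this

theorem posSemidef_blockCov_conj_of_symplectic {O : Matrix (Fin 2) (Fin 2) ℝ} (hO : Oᵀ * O = 1)
    (hΔ : Oᵀ * Δsymp * O = Δsymp) {ν' ν : ℝ} {X : Matrix (Fin 2) (Fin 2) ℝ} {c : ℂ}
    (h : ((blockCov ν' ν X).map Complex.ofReal + c • Jmat).PosSemidef) :
    ((blockCov ν' ν (Oᵀ * X * O)).map Complex.ofReal + c • Jmat).PosSemidef := by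
  have := posSemidef_blockCov_conj hO h
  rwa [hΔ, ← smul_smul] at this

theorem posSemidef_blockCov_conj_of_antisymplectic {O : Matrix (Fin 2) (Fin 2) ℝ}
    (hO : Oᵀ * O = 1) (hΔ : Oᵀ * Δsymp * O = -Δsymp) {ν' ν : ℝ} {X : Matrix (Fin 2) (Fin 2) ℝ}
    {c : ℂ} (h : ((blockCov ν' ν X).map Complex.ofReal + c • Jmat).PosSemidef) :
    ((blockCov ν' ν (Oᵀ * X * O)).map Complex.ofReal + (-c) • Jmat).PosSemidef := by
  have := posSemidef_blockCov_conj hO h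
  have hK : fromBlocks (-Δsymp) 0 0 (-(-Δsymp)) = -fromBlocks Δsymp 0 0 (-Δsymp) := by
    simp [fromBlocks_neg]
  rwa [hΔ, hK, Matrix.map_neg _ Complex.ofReal_neg, smul_neg, ← neg_smul, ← neg_mul,
    ← smul_smul] at this

theorem posSemidef_map_ofReal_midpoint_add {n : Type*} [Fintype n] {A B : Matrix n n ℝ}
    {M : Matrix n n ℂ} (hA : (A.map Complex.ofReal + M).PosSemidef)
    (hB : (B.map Complex.ofReal + M).PosSemidef) :
    ((midpoint ℝ A B).map Complex.ofReal + M).PosSemidef := by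
  have : (midpoint ℝ A B).map Complex.ofReal + M =
      (2⁻¹ : ℝ) • ((A.map Complex.ofReal + M) + (B.map Complex.ofReal + M)) := by
    ext i j; simp [midpoint_eq_smul_add]; ring
  rw [this]
  exact (hA.add hB).smul (by norm_num)

theorem blockCov_midpoint {n : Type*} [DecidableEq n] (ν' ν : ℝ) (X Y : Matrix n n ℝ) :
    blockCov ν' ν (midpoint ℝ X Y) = midpoint ℝ (blockCov ν' ν X) (blockCov ν' ν Y) := by
  ext (i | i) (j | j) <;> simp [blockCov, midpoint_eq_smul_add] <;> ring

def pauliZ : Matrix (Fin 2) (Fin 2) ℝ := !![1, 0; 0, -1]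

theorem Δsymp_transpose_mul_self : Δsympᵀ * Δsymp = 1 := by
  ext i j; fin_cases i <;> fin_cases j <;> simp [Δsymp, mul_apply, Fin.sum_univ_two]

theorem Δsymp_transpose_mul_mul_self : Δsympᵀ * Δsymp * Δsymp = Δsymp := by
  rw [Δsymp_transpose_mul_self, Matrix.one_mul]

theorem pauliZ_transpose_mul_self : pauliZᵀ * pauliZ = 1 := by
  ext i j; fin_cases i <;> fin_cases j <;> simp [pauliZ, mul_apply, Fin.sum_univ_two]

theorem pauliZ_transpose_mul_Δsymp_mul_self : pauliZᵀ * Δsymp * pauliZ = -Δsymp := by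
  ext i j; fin_cases i <;> fin_cases j <;> simp [pauliZ, Δsymp, mul_apply, Fin.sum_univ_two]

theorem midpoint_conj_pauliZ_midpoint_conj_Δsymp (X : Matrix (Fin 2) (Fin 2) ℝ) :
    midpoint ℝ (midpoint ℝ X (Δsympᵀ * X * Δsymp))
        (pauliZᵀ * midpoint ℝ X (Δsympᵀ * X * Δsymp) * pauliZ) =
      ((X 0 0 + X 1 1) / 2) • 1 := by
  ext i j; fin_cases i <;> fin_cases j <;>
    simp [midpoint_eq_smul_add, Δsymp, pauliZ, mul_apply, Fin.sum_univ_two] <;> ring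

def IsFeasibleOffBlock (ν' ν : ℝ) (X : Matrix (Fin 2) (Fin 2) ℝ) : Prop :=
  ((blockCov ν' ν X).map Complex.ofReal + Jmat).PosSemidef ∧
    ((blockCov ν' ν X).map Complex.ofReal - Jmat).PosSemidef

namespace IsFeasibleOffBlock

variable {ν' ν : ℝ} {X : Matrix (Fin 2) (Fin 2) ℝ}

theorem iff_smul : IsFeasibleOffBlock ν' ν X ↔
    ((blockCov ν' ν X).map Complex.ofReal + (1 : ℂ) • Jmat).PosSemidef ∧
      ((blockCov ν' ν X).map Complex.ofReal + (-1 : ℂ) • Jmat).PosSemidef := by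
  rw [one_smul, neg_one_smul, ← sub_eq_add_neg]
  rfl

theorem conj_of_symplectic {O : Matrix (Fin 2) (Fin 2) ℝ} (hO : Oᵀ * O = 1)
    (hΔ : Oᵀ * Δsymp * O = Δsymp) (h : IsFeasibleOffBlock ν' ν X) :
    IsFeasibleOffBlock ν' ν (Oᵀ * X * O) := by
  rw [iff_smul] at h ⊢
  exact ⟨posSemidef_blockCov_conj_of_symplectic hO hΔ h.1,
    posSemidef_blockCov_conj_of_symplectic hO hΔ h.2⟩

theorem conj_of_antisymplectic {O : Matrix (Fin 2) (Fin 2) ℝ} (hO : Oᵀ * O = 1)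
    (hΔ : Oᵀ * Δsymp * O = -Δsymp) (h : IsFeasibleOffBlock ν' ν X) :
    IsFeasibleOffBlock ν' ν (Oᵀ * X * O) := by
  rw [iff_smul] at h ⊢
  refine ⟨?_, posSemidef_blockCov_conj_of_antisymplectic hO hΔ h.1⟩
  simpa only [neg_neg] using posSemidef_blockCov_conj_of_antisymplectic hO hΔ h.2

theorem midpoint {Y : Matrix (Fin 2) (Fin 2) ℝ} (hX : IsFeasibleOffBlock ν' ν X)
    (hY : IsFeasibleOffBlock ν' ν Y) : IsFeasibleOffBlock ν' ν (midpoint ℝ X Y) := by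
  rw [iff_smul, blockCov_midpoint] at *
  exact ⟨posSemidef_map_ofReal_midpoint_add hX.1 hY.1,
    posSemidef_map_ofReal_midpoint_add hX.2 hY.2⟩

end IsFeasibleOffBlock

theorem off_block_symmetrization_general (ν ν' : ℝ) (X : Matrix (Fin 2) (Fin 2) ℝ)
    (hplus : ((Matrix.fromBlocks (ν' • 1) X Xᵀ (ν • 1)).map Complex.ofReal
        + Jmat).PosSemidef)
    (hminus : ((Matrix.fromBlocks (ν' • 1) X Xᵀ (ν • 1)).map Complex.ofReal
        - Jmat).PosSemidef) :
    ((Matrix.fromBlocks (ν' • 1) (((X 0 0 + X 1 1) / 2) • 1)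
        ((((X 0 0 + X 1 1) / 2) • 1 : Matrix (Fin 2) (Fin 2) ℝ))ᵀ (ν • 1)).map Complex.ofReal
        + Jmat).PosSemidef ∧
    ((Matrix.fromBlocks (ν' • 1) (((X 0 0 + X 1 1) / 2) • 1)
        ((((X 0 0 + X 1 1) / 2) • 1 : Matrix (Fin 2) (Fin 2) ℝ))ᵀ (ν • 1)).map Complex.ofReal
        - Jmat).PosSemidef := by
  have hX : IsFeasibleOffBlock ν' ν X := ⟨hplus, hminus⟩
  have hY := hX.midpoint (hX.conj_of_symplectic Δsymp_transpose_mul_self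
    Δsymp_transpose_mul_mul_self)
  have hZ := hY.midpoint (hY.conj_of_antisymplectic pauliZ_transpose_mul_self
    pauliZ_transpose_mul_Δsymp_mul_self)
  rwa [midpoint_conj_pauliZ_midpoint_conj_Δsymp] at hZ

/-- **Symmetrization of feasible off-blocks** (from the proof of Theorem 4.3). -/
theorem off_block_symmetrization (ν ν' : ℝ) (hν : 1 / 2 ≤ ν) (hνν' : ν ≤ ν')
    (X : Matrix (Fin 2) (Fin 2) ℝ)
    (hplus : ((Matrix.fromBlocks (ν' • 1) X Xᵀ (ν • 1)).map Complex.ofReal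
        + Jmat).PosSemidef)
    (hminus : ((Matrix.fromBlocks (ν' • 1) X Xᵀ (ν • 1)).map Complex.ofReal
        - Jmat).PosSemidef) :
    ((Matrix.fromBlocks (ν' • 1) (((X 0 0 + X 1 1) / 2) • 1)
        ((((X 0 0 + X 1 1) / 2) • 1 : Matrix (Fin 2) (Fin 2) ℝ))ᵀ (ν • 1)).map Complex.ofReal
        + Jmat).PosSemidef ∧
    ((Matrix.fromBlocks (ν' • 1) (((X 0 0 + X 1 1) / 2) • 1)
        ((((X 0 0 + X 1 1) / 2) • 1 : Matrix (Fin 2) (Fin 2) ℝ))ᵀ (ν • 1)).map Complex.ofReal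
        - Jmat).PosSemidef :=
  off_block_symmetrization_general ν ν' X hplus hminus
end
end

section
/- Kraus-type decomposition of couplings (equation (eq:condA) in the proof of Proposition 2.3): let ρ, σ be density matrices of size n and let Π be a coupling between ρ and σ. Then there exist m : ℕ and matrices A₀, …, A_{m−1} : Matrix (Fin n) (Fin n) ℂ such that Π (i, j) (k, l) = ∑ t, (A_t) i j * conj((A_t) k l) for all i, j, k, l, and ∑ t, (A_t)ᴴ * A_t = ρ, and ∑ t, A_t * (A_t)ᴴ = σ. -/
open Matrix
open scoped ComplexOrder

noncomputable section

/-!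
A coupling `Π` is positive semidefinite, so `Π = Bᴴ B`. Reshaping the conjugated rows of `B` into
square matrices `Aₜ` writes `Π = ∑ₜ vec Aₜ (vec Aₜ)ᴴ`. The two partial traces of such a matrix are
`∑ₜ Aₜᴴ Aₜ` and `∑ₜ Aₜ Aₜᴴ`, and the marginal conditions of a coupling say that these are `ρ` and `σ`.
-/

namespace Matrix

variable {𝕜 ι κ : Type*} [RCLike 𝕜] [Fintype κ]

def krausMatrix (A : κ → Matrix ι ι 𝕜) : Matrix (ι × ι) (ι × ι) 𝕜 :=
  of fun p q => ∑ t, A t p.1 p.2 * star (A t q.1 q.2)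

lemma krausMatrix_comp_equiv {κ' : Type*} [Fintype κ'] (A : κ → Matrix ι ι 𝕜) (e : κ' ≃ κ) :
    krausMatrix (A ∘ e) = krausMatrix A := by
  ext p q
  exact e.sum_comp fun t => A t p.1 p.2 * star (A t q.1 q.2)

lemma sum_krausMatrix_apply_fst [Fintype ι] (A : κ → Matrix ι ι 𝕜) (j l : ι) :
    ∑ i, krausMatrix A (i, j) (i, l) = (∑ t, (A t)ᴴ * A t) l j := by
  simp only [krausMatrix, of_apply, sum_apply, mul_apply, conjTranspose_apply]
  rw [Finset.sum_comm]
  simp_rw [mul_comm]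

lemma sum_krausMatrix_apply_snd [Fintype ι] (A : κ → Matrix ι ι 𝕜) (i k : ι) :
    ∑ j, krausMatrix A (i, j) (k, j) = (∑ t, A t * (A t)ᴴ) i k := by
  simp only [krausMatrix, of_apply, sum_apply, mul_apply, conjTranspose_apply]
  exact Finset.sum_comm

lemma PosSemidef.exists_eq_krausMatrix [Fintype ι] {P : Matrix (ι × ι) (ι × ι) 𝕜}
    (hP : P.PosSemidef) :
    ∃ (m : ℕ) (A : Fin m → Matrix ι ι 𝕜), P = krausMatrix A := by
  classical
  open scoped MatrixOrder in
  obtain ⟨B, rfl⟩ := CStarAlgebra.nonneg_iff_eq_star_mul_self.mp hP.nonneg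
  let A : ι × ι → Matrix ι ι 𝕜 := fun t => of fun i j => star (B t (i, j))
  refine ⟨_, A ∘ (Fintype.equivFin (ι × ι)).symm, ?_⟩
  rw [krausMatrix_comp_equiv]
  ext p q
  simp [A, krausMatrix, mul_apply, mul_comm]

end Matrix

theorem coupling_kraus_decomposition_general {n : ℕ}
    (ρ σ : Matrix (Fin n) (Fin n) ℂ)
    (P : Matrix (Fin n × Fin n) (Fin n × Fin n) ℂ) (hP : IsCoupling ρ σ P) :
    ∃ (m : ℕ) (A : Fin m → Matrix (Fin n) (Fin n) ℂ),
      (∀ i j k l, P (i, j) (k, l) = ∑ t, A t i j * (starRingEnd ℂ) (A t k l)) ∧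
      (∑ t, (A t)ᴴ * A t = ρ) ∧
      (∑ t, A t * (A t)ᴴ = σ) := by
  obtain ⟨hPsd, -, hρ, hσ⟩ := hP
  obtain ⟨m, A, rfl⟩ := hPsd.exists_eq_krausMatrix
  refine ⟨m, A, fun i j k l => rfl, ?_, ?_⟩
  · ext l j
    rw [← hρ, sum_krausMatrix_apply_fst]
  · ext i k
    rw [← hσ, sum_krausMatrix_apply_snd]

/-- **Kraus-type decomposition of couplings** (equation (eq:condA) in the proof of
Proposition 2.3). -/
theorem coupling_kraus_decomposition {n : ℕ}
    (ρ σ : Matrix (Fin n) (Fin n) ℂ) (hρ : IsDensity ρ) (hσ : IsDensity σ)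
    (P : Matrix (Fin n × Fin n) (Fin n × Fin n) ℂ) (hP : IsCoupling ρ σ P) :
    ∃ (m : ℕ) (A : Fin m → Matrix (Fin n) (Fin n) ℂ),
      (∀ i j k l, P (i, j) (k, l) = ∑ t, A t i j * (starRingEnd ℂ) (A t k l)) ∧
      (∑ t, (A t)ᴴ * A t = ρ) ∧
      (∑ t, A t * (A t)ᴴ = σ) :=
  coupling_kraus_decomposition_general ρ σ P hP
end
end

section
/- Marginals of a coupling of product states are couplings (from the proof of Proposition 3.6): let ρ₁, σ₁ be density matrices of size n₁ and ρ₂, σ₂ density matrices of size n₂, and let Π be a coupling between ρ₁ ⊗ ρ₂ and σ₁ ⊗ σ₂ (Kronecker products, viewed as matrices indexed by Fin n₁ × Fin n₂). Then the matrix Π₁ with entries Π₁ (i₁, j₁) (k₁, l₁) = ∑ i₂, ∑ j₂, Π ((i₁, i₂), (j₁, j₂)) ((k₁, i₂), (l₁, j₂)) is a coupling between ρ₁ and σ₁. -/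
open Matrix
open scoped ComplexOrder

noncomputable section

open Kronecker

/-- **Marginals of a coupling of product states are couplings** (from the proof of
Proposition 3.6). -/
theorem marginal_coupling {n₁ n₂ : ℕ}
    (ρ₁ σ₁ : Matrix (Fin n₁) (Fin n₁) ℂ) (hρ₁ : IsDensity ρ₁) (hσ₁ : IsDensity σ₁)
    (ρ₂ σ₂ : Matrix (Fin n₂) (Fin n₂) ℂ) (hρ₂ : IsDensity ρ₂) (hσ₂ : IsDensity σ₂)
    (P : Matrix ((Fin n₁ × Fin n₂) × (Fin n₁ × Fin n₂))
        ((Fin n₁ × Fin n₂) × (Fin n₁ × Fin n₂)) ℂ)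
    (hP : IsCoupling (ρ₁ ⊗ₖ ρ₂) (σ₁ ⊗ₖ σ₂) P) :
    IsCoupling ρ₁ σ₁ (Matrix.of fun p q : Fin n₁ × Fin n₁ =>
      ∑ i₂, ∑ j₂, P ((p.1, i₂), (p.2, j₂)) ((q.1, i₂), (q.2, j₂))) := by
  obtain ⟨hPos, hTr, hM1, hM2⟩ := hP
  set Q : Matrix (Fin n₁ × Fin n₁) (Fin n₁ × Fin n₁) ℂ :=
    Matrix.of fun p q : Fin n₁ × Fin n₁ =>
      ∑ i₂, ∑ j₂, P ((p.1, i₂), (p.2, j₂)) ((q.1, i₂), (q.2, j₂)) with hQ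
  have hPSD : Q.PosSemidef := by
    set V : Fin n₂ → Fin n₂ →
        Matrix ((Fin n₁ × Fin n₂) × (Fin n₁ × Fin n₂)) (Fin n₁ × Fin n₁) ℂ :=
      fun i₂ j₂ => Matrix.of fun a p =>
        if a = ((p.1, i₂), (p.2, j₂)) then 1 else 0 with hV
    have hrepr : Q = ∑ i₂ : Fin n₂, ∑ j₂ : Fin n₂,
        (V i₂ j₂)ᴴ * P * (V i₂ j₂) := by
      ext p q
      simp only [Matrix.sum_apply, hQ, Matrix.of_apply]
      refine Finset.sum_congr rfl fun i₂ _ => Finset.sum_congr rfl fun j₂ _ => ?_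
      simp only [Matrix.mul_apply, Matrix.conjTranspose_apply, hV, Matrix.of_apply]
      simp [apply_ite (star : ℂ → ℂ), ite_mul, mul_ite, Finset.sum_ite_eq',
        Finset.sum_ite_eq]
    rw [hrepr]
    refine Finset.sum_induction _ _ (fun a b ha hb => ha.add hb) Matrix.PosSemidef.zero
      fun i₂ _ => ?_
    exact Finset.sum_induction _ _ (fun a b ha hb => ha.add hb) Matrix.PosSemidef.zero
      fun j₂ _ => hPos.conjTranspose_mul_mul_same _
  refine ⟨hPSD, ?_, ?_, ?_⟩
  · have h1 : Q.trace = ∑ i₁ : Fin n₁, ∑ j₁ : Fin n₁, ∑ i₂ : Fin n₂, ∑ j₂ : Fin n₂,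
        P ((i₁, i₂), (j₁, j₂)) ((i₁, i₂), (j₁, j₂)) := by
      simp [Matrix.trace, Matrix.diag, hQ, Fintype.sum_prod_type]
    have h2 : P.trace = ∑ i₁ : Fin n₁, ∑ i₂ : Fin n₂, ∑ j₁ : Fin n₁, ∑ j₂ : Fin n₂,
        P ((i₁, i₂), (j₁, j₂)) ((i₁, i₂), (j₁, j₂)) := by
      simp [Matrix.trace, Matrix.diag, Fintype.sum_prod_type]
    have h3 : Q.trace = P.trace := by
      rw [h1, h2]
      exact Finset.sum_congr rfl fun i₁ _ => Finset.sum_comm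
    rw [h3, hTr]
  · intro j l
    have key : ∑ j₂ : Fin n₂, ∑ i : Fin n₁ × Fin n₂,
        P (i, (j, j₂)) (i, (l, j₂)) = ∑ j₂ : Fin n₂, (ρ₁ ⊗ₖ ρ₂) (l, j₂) (j, j₂) :=
      Finset.sum_congr rfl fun j₂ _ => hM1 (j, j₂) (l, j₂)
    calc ∑ i, Q (i, j) (i, l)
        = ∑ i₁ : Fin n₁, ∑ i₂ : Fin n₂, ∑ j₂ : Fin n₂,
            P ((i₁, i₂), (j, j₂)) ((i₁, i₂), (l, j₂)) := by
          simp only [hQ, Matrix.of_apply]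
      _ = ∑ i₁ : Fin n₁, ∑ j₂ : Fin n₂, ∑ i₂ : Fin n₂,
            P ((i₁, i₂), (j, j₂)) ((i₁, i₂), (l, j₂)) :=
          Finset.sum_congr rfl fun i₁ _ => Finset.sum_comm
      _ = ∑ j₂ : Fin n₂, ∑ i₁ : Fin n₁, ∑ i₂ : Fin n₂,
            P ((i₁, i₂), (j, j₂)) ((i₁, i₂), (l, j₂)) := Finset.sum_comm
      _ = ∑ j₂ : Fin n₂, ∑ i : Fin n₁ × Fin n₂, P (i, (j, j₂)) (i, (l, j₂)) :=
          Finset.sum_congr rfl fun j₂ _ =>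
            (Fintype.sum_prod_type (f := fun i : Fin n₁ × Fin n₂ =>
              P (i, (j, j₂)) (i, (l, j₂)))).symm
      _ = ∑ j₂ : Fin n₂, ρ₁ l j * ρ₂ j₂ j₂ := by
          rw [key]; simp [Matrix.kroneckerMap_apply]
      _ = ρ₁ l j := by
          rw [← Finset.mul_sum]
          have ht : ∑ j₂ : Fin n₂, ρ₂ j₂ j₂ = ρ₂.trace := rfl
          rw [ht, hρ₂.2, mul_one]
  · intro i k
    have key : ∑ i₂ : Fin n₂, ∑ j : Fin n₁ × Fin n₂,
        P ((i, i₂), j) ((k, i₂), j) = ∑ i₂ : Fin n₂, (σ₁ ⊗ₖ σ₂) (i, i₂) (k, i₂) :=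
      Finset.sum_congr rfl fun i₂ _ => hM2 (i, i₂) (k, i₂)
    calc ∑ j, Q (i, j) (k, j)
        = ∑ j₁ : Fin n₁, ∑ i₂ : Fin n₂, ∑ j₂ : Fin n₂,
            P ((i, i₂), (j₁, j₂)) ((k, i₂), (j₁, j₂)) := by
          simp only [hQ, Matrix.of_apply]
      _ = ∑ i₂ : Fin n₂, ∑ j₁ : Fin n₁, ∑ j₂ : Fin n₂,
            P ((i, i₂), (j₁, j₂)) ((k, i₂), (j₁, j₂)) := Finset.sum_comm
      _ = ∑ i₂ : Fin n₂, ∑ j : Fin n₁ × Fin n₂, P ((i, i₂), j) ((k, i₂), j) :=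
          Finset.sum_congr rfl fun i₂ _ =>
            (Fintype.sum_prod_type (f := fun j : Fin n₁ × Fin n₂ =>
              P ((i, i₂), j) ((k, i₂), j))).symm
      _ = ∑ i₂ : Fin n₂, σ₁ i k * σ₂ i₂ i₂ := by
          rw [key]; simp [Matrix.kroneckerMap_apply]
      _ = σ₁ i k := by
          rw [← Finset.mul_sum]
          have ht : ∑ i₂ : Fin n₂, σ₂ i₂ i₂ = σ₂.trace := rfl
          rw [ht, hσ₂.2, mul_one]
end
end
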